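/- arXiv:1105.3022 — 11 statements merged into one kernel-verified Lean document; each statement's English description precedes it below -/
import Mathlib

section
/- For every integer m ≥ 1 and every n ∈ ℕ, the determinantal identity Ψ_{m−1}(Δ³S)_n · Ψ_m(S)_{n+1} − Ψ_{m−1}(Δ³S)_{n+1} · Ψ_m(S)_n = Ψ_m(ΔS)_n · Ψ_{m−1}(Δ²S)_{n+1} holds. (This is the bilinear relation F_k^n G_k^{n+1} − F_k^{n+1} G_k^n = F_{k+1}^n F_{k−1}^{n+1} of the lattice Boussinesq molecule solution in the case k = 3m.) -/
/-!
Let `u c` be the column `((Δ^[2 i] S) (n + c))_{i < m}` for `c ≤ m`, and border the `m × (m + 1)`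
matrix `(u 0 ⋯ u m)` by a last row of ones. Subtracting neighbouring columns shows that this square
matrix has determinant `± Ψ_m(ΔS)_n`, and that deleting its first row together with its first or
last column leaves `± Ψ_{m-1}(Δ³S)_{n+1}` or `± Ψ_{m-1}(Δ³S)_n`. Deleting the row of ones together
with the first or last column leaves `Ψ_m(S)_{n+1}` or `Ψ_m(S)_n`, and the central minor is
`Ψ_{m-1}(Δ²S)_{n+1}`. The identity is therefore the Desnanot–Jacobi identity (Dodgson condensation)
for this matrix. That identity is Jacobi's theorem on the minors of the adjugate after cancelling
the determinant, which is legitimate for the generic matrix over `ℤ[X_ij]`.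
-/

/-- Forward difference operator: `(Δ v) n = v (n+1) - v n`. -/
def Δ (v : ℕ → ℝ) : ℕ → ℝ := fun n => v (n + 1) - v n

/-- `Psi k v n` is the determinant of the `k × k` matrix whose `(i, j)` entry is
`(Δ^[2*i] v) (n + j)`.  For `k = 0` this is the empty determinant `1`. -/
noncomputable def Psi (k : ℕ) (v : ℕ → ℝ) (n : ℕ) : ℝ :=
  (Matrix.of fun i j : Fin k => (Δ^[2 * i.val] v) (n + j.val)).det

namespace Matrix

section Jacobi

variable {R n ι κ : Type*} [CommRing R] [Fintype n] [DecidableEq n] [Fintype ι] [DecidableEq ι]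
  [Fintype κ] [DecidableEq κ]

theorem det_mul_det_submatrix_adjugate (M : Matrix n n R) (f : ι ⊕ κ ≃ n) :
    M.det * (M.adjugate.submatrix (f ∘ Sum.inl) (f ∘ Sum.inl)).det
      = M.det ^ Fintype.card ι * (M.submatrix (f ∘ Sum.inr) (f ∘ Sum.inr)).det := by
  set M' := M.submatrix f f
  set A := M'.adjugate
  have hA : A = M.adjugate.submatrix f f := adjugate_submatrix_equiv_self f M
  have hdet : M'.det = M.det := det_submatrix_equiv_self f M
  have hblocks : fromBlocks (M'.toBlocks₁₁ * A.toBlocks₁₁ + M'.toBlocks₁₂ * A.toBlocks₂₁)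
      (M'.toBlocks₁₁ * A.toBlocks₁₂ + M'.toBlocks₁₂ * A.toBlocks₂₂)
      (M'.toBlocks₂₁ * A.toBlocks₁₁ + M'.toBlocks₂₂ * A.toBlocks₂₁)
      (M'.toBlocks₂₁ * A.toBlocks₁₂ + M'.toBlocks₂₂ * A.toBlocks₂₂)
      = fromBlocks (M'.det • (1 : Matrix ι ι R)) 0 0 (M'.det • (1 : Matrix κ κ R)) := by
    rw [← fromBlocks_multiply, fromBlocks_toBlocks, fromBlocks_toBlocks, mul_adjugate,
      ← fromBlocks_one, fromBlocks_smul, smul_zero, smul_zero]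
  obtain ⟨h₁₁, -, h₂₁, -⟩ := fromBlocks_inj.mp hblocks
  have hmul : M' * fromBlocks A.toBlocks₁₁ 0 A.toBlocks₂₁ 1
      = fromBlocks (M'.det • 1) M'.toBlocks₁₂ 0 M'.toBlocks₂₂ := by
    conv_lhs => rw [← fromBlocks_toBlocks M']
    rw [fromBlocks_multiply, h₁₁, h₂₁]
    simp
  have hdet_mul := congrArg det hmul
  rwa [det_mul, det_fromBlocks_zero₁₂, det_fromBlocks_zero₂₁, det_one, mul_one, det_smul, det_one,
    mul_one, hdet, hA] at hdet_mul

end Jacobi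

section Dodgson

variable {R : Type*} [CommRing R] {p : ℕ}

theorem det_mul_det_mul_det_submatrix_castSucc_succ (M : Matrix (Fin (p + 2)) (Fin (p + 2)) R) :
    M.det * (M.det * (M.submatrix (fun i : Fin p => i.castSucc.succ)
      (fun j => j.castSucc.succ)).det)
      = M.det * ((M.submatrix Fin.succ Fin.succ).det * (M.submatrix Fin.castSucc Fin.castSucc).det
        - (M.submatrix Fin.succ Fin.castSucc).det * (M.submatrix Fin.castSucc Fin.succ).det) := by
  let f : Fin 2 ⊕ Fin p ≃ Fin (p + 2) :=
    Equiv.ofBijective (Sum.elim ![0, Fin.last (p + 1)] fun i => i.castSucc.succ) <| by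
      refine (Fintype.bijective_iff_injective_and_card _).mpr ⟨?_, by simp [add_comm]⟩
      rintro (a | a) (b | b) h
      · fin_cases a <;> fin_cases b <;> simp_all [Fin.ext_iff]
      · fin_cases a <;> simp [Fin.ext_iff] at h
        omega
      · fin_cases b <;> simp [Fin.ext_iff] at h
        omega
      · simp_all [Fin.ext_iff]
  have hf0 : f (.inl 0) = 0 := rfl
  have hf1 : f (.inl 1) = Fin.last (p + 1) := rfl
  have hfr : f ∘ Sum.inr = fun i : Fin p => i.castSucc.succ := rfl
  have h := det_mul_det_submatrix_adjugate M f
  simp only [det_fin_two, submatrix_apply, Function.comp_apply, hf0, hf1, Fintype.card_fin,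
    adjugate_fin_succ_eq_det_submatrix, Fin.succAbove_zero, Fin.succAbove_last, Fin.val_zero,
    Fin.val_last, hfr, add_zero, zero_add, pow_zero, one_mul] at h
  have hsign : ((-1 : R) ^ (p + 1)) ^ 2 = 1 := by rw [← pow_mul, pow_mul', neg_one_sq, one_pow]
  linear_combination -h + M.det * ((M.submatrix Fin.succ Fin.succ).det
    * (M.submatrix Fin.castSucc Fin.castSucc).det
    - (M.submatrix Fin.succ Fin.castSucc).det * (M.submatrix Fin.castSucc Fin.succ).det) * hsign

theorem det_mul_det_submatrix_castSucc_succ (M : Matrix (Fin (p + 2)) (Fin (p + 2)) R) :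
    M.det * (M.submatrix (fun i : Fin p => i.castSucc.succ) (fun j => j.castSucc.succ)).det
      = (M.submatrix Fin.succ Fin.succ).det * (M.submatrix Fin.castSucc Fin.castSucc).det
        - (M.submatrix Fin.succ Fin.castSucc).det * (M.submatrix Fin.castSucc Fin.succ).det := by
  let X := mvPolynomialX (Fin (p + 2)) (Fin (p + 2)) ℤ
  have hX : X.det * (X.submatrix (fun i : Fin p => i.castSucc.succ) (fun j => j.castSucc.succ)).det
      = (X.submatrix Fin.succ Fin.succ).det * (X.submatrix Fin.castSucc Fin.castSucc).det
        - (X.submatrix Fin.succ Fin.castSucc).det * (X.submatrix Fin.castSucc Fin.succ).det :=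
    mul_left_cancel₀ (det_mvPolynomialX_ne_zero _ ℤ) (det_mul_det_mul_det_submatrix_castSucc_succ X)
  have hM := congrArg (MvPolynomial.aeval fun q : Fin (p + 2) × Fin (p + 2) => M q.1 q.2) hX
  simp only [map_mul, map_sub, AlgHom.map_det, AlgHom.mapMatrix_apply, ← submatrix_map] at hM
  rwa [← AlgHom.mapMatrix_apply, mvPolynomialX_mapMatrix_aeval] at hM

end Dodgson

theorem det_eq_neg_one_pow_mul_det_sub_of_last_row_eq_one {R : Type*} [CommRing R] {q : ℕ}
    (A : Matrix (Fin (q + 1)) (Fin (q + 1)) R) (hA : ∀ j, A (Fin.last q) j = 1) :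
    A.det = (-1) ^ q * (of fun i j : Fin q => A i.castSucc j.succ - A i.castSucc j.castSucc).det := by
  let B : Matrix (Fin (q + 1)) (Fin (q + 1)) R :=
    of fun i => Fin.cases (A i 0) fun j => A i j.succ - A i j.castSucc
  have hAB : A.det = B.det :=
    det_eq_of_forall_col_eq_smul_add_pred (fun _ => 1) (fun _ => rfl) (fun i j => by simp [B])
  have hB : B.submatrix Fin.castSucc Fin.succ
      = of fun i j : Fin q => A i.castSucc j.succ - A i.castSucc j.castSucc := rfl
  rw [hAB, det_succ_row B (Fin.last q), Fintype.sum_eq_single 0]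
  · simp [B, hA, hB]
  · intro j hj
    obtain ⟨j, rfl⟩ := Fin.exists_succ_eq.mpr hj
    simp [B, hA]

end Matrix

open Matrix

theorem iterate_Δ_succ_apply (a : ℕ) (v : ℕ → ℝ) (m : ℕ) :
    (Δ^[a + 1] v) m = (Δ^[a] v) (m + 1) - (Δ^[a] v) m := by
  rw [Function.iterate_succ_apply']
  rfl

theorem Psi_iterate (k a : ℕ) (v : ℕ → ℝ) (m : ℕ) :
    Psi k (Δ^[a] v) m = (of fun i j : Fin k => (Δ^[2 * i + a] v) (m + j)).det := by
  simp only [Psi, Function.iterate_add_apply]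

def borderedPsiMatrix (S : ℕ → ℝ) (k n : ℕ) : Matrix (Fin (k + 2)) (Fin (k + 2)) ℝ :=
  of fun r c => Fin.lastCases 1 (fun i : Fin (k + 1) => (Δ^[2 * i] S) (n + c)) r

section borderedPsiMatrix

variable (S : ℕ → ℝ) (k n : ℕ)

@[simp]
theorem borderedPsiMatrix_castSucc (i : Fin (k + 1)) (c : Fin (k + 2)) :
    borderedPsiMatrix S k n i.castSucc c = (Δ^[2 * i] S) (n + c) := by
  simp [borderedPsiMatrix]

@[simp]
theorem borderedPsiMatrix_last (c : Fin (k + 2)) : borderedPsiMatrix S k n (Fin.last _) c = 1 := by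
  simp [borderedPsiMatrix]

theorem det_borderedPsiMatrix :
    (borderedPsiMatrix S k n).det = (-1) ^ (k + 1) * Psi (k + 1) (Δ S) n := by
  rw [det_eq_neg_one_pow_mul_det_sub_of_last_row_eq_one _ (borderedPsiMatrix_last S k n),
    show Δ S = Δ^[1] S from rfl, Psi_iterate]
  congr 2
  ext i j
  simp [iterate_Δ_succ_apply, add_assoc]

theorem det_borderedPsiMatrix_submatrix_succ_succ :
    ((borderedPsiMatrix S k n).submatrix Fin.succ Fin.succ).det
      = (-1) ^ k * Psi k (Δ^[3] S) (n + 1) := by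
  rw [det_eq_neg_one_pow_mul_det_sub_of_last_row_eq_one _ (by simp), Psi_iterate]
  congr 2
  ext i j
  simp only [of_apply, submatrix_apply, Fin.succ_castSucc, borderedPsiMatrix_castSucc]
  rw [show 2 * (i : ℕ) + 3 = 2 * (i.succ : ℕ) + 1 by simp [Fin.val_succ]; ring,
    iterate_Δ_succ_apply]
  simp only [Fin.val_succ, Fin.val_castSucc]
  ring_nf

theorem det_borderedPsiMatrix_submatrix_succ_castSucc :
    ((borderedPsiMatrix S k n).submatrix Fin.succ Fin.castSucc).det
      = (-1) ^ k * Psi k (Δ^[3] S) n := by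
  rw [det_eq_neg_one_pow_mul_det_sub_of_last_row_eq_one _ (by simp), Psi_iterate]
  congr 2
  ext i j
  simp only [of_apply, submatrix_apply, Fin.succ_castSucc, borderedPsiMatrix_castSucc]
  rw [show 2 * (i : ℕ) + 3 = 2 * (i.succ : ℕ) + 1 by simp [Fin.val_succ]; ring,
    iterate_Δ_succ_apply]
  simp only [Fin.val_succ, Fin.val_castSucc]
  ring_nf

theorem det_borderedPsiMatrix_submatrix_castSucc_castSucc :
    ((borderedPsiMatrix S k n).submatrix Fin.castSucc Fin.castSucc).det = Psi (k + 1) S n := by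
  congr 1
  ext i j
  simp

theorem det_borderedPsiMatrix_submatrix_castSucc_succ :
    ((borderedPsiMatrix S k n).submatrix Fin.castSucc Fin.succ).det = Psi (k + 1) S (n + 1) := by
  congr 1
  ext i j
  simp [add_assoc, add_comm 1]

theorem det_borderedPsiMatrix_submatrix_castSucc_succ_castSucc_succ :
    ((borderedPsiMatrix S k n).submatrix (fun i : Fin k => i.castSucc.succ)
      (fun j => j.castSucc.succ)).det = Psi k (Δ^[2] S) (n + 1) := by
  rw [Psi_iterate]
  congr 1
  ext i j
  simp only [of_apply, submatrix_apply, Fin.succ_castSucc, borderedPsiMatrix_castSucc]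
  rw [show 2 * (i : ℕ) + 2 = 2 * (i.succ : ℕ) by simp [Fin.val_succ]; ring]
  simp only [Fin.val_succ, Fin.val_castSucc]
  ring_nf

end borderedPsiMatrix

theorem stmt0 (S : ℕ → ℝ) (m : ℕ) (hm : 1 ≤ m) (n : ℕ) :
    Psi (m - 1) (Δ^[3] S) n * Psi m S (n + 1)
      - Psi (m - 1) (Δ^[3] S) (n + 1) * Psi m S n
      = Psi m (Δ S) n * Psi (m - 1) (Δ^[2] S) (n + 1) := by
  obtain ⟨k, rfl⟩ : ∃ k, m = k + 1 := ⟨m - 1, by omega⟩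
  have h := det_mul_det_submatrix_castSucc_succ (borderedPsiMatrix S k n)
  rw [det_borderedPsiMatrix, det_borderedPsiMatrix_submatrix_succ_succ,
    det_borderedPsiMatrix_submatrix_succ_castSucc,
    det_borderedPsiMatrix_submatrix_castSucc_castSucc,
    det_borderedPsiMatrix_submatrix_castSucc_succ,
    det_borderedPsiMatrix_submatrix_castSucc_succ_castSucc_succ, pow_succ] at h
  rw [Nat.add_sub_cancel]
  rcases neg_one_pow_eq_or ℝ k with hk | hk <;> rw [hk] at h
  · linear_combination h
  · linear_combination -h
end

section
/- For every integer m ≥ 1 and every n ∈ ℕ, the determinantal identity Ψ_m(ΔS)_{n+1} · Ψ_{m−1}(Δ⁴S)_n − Ψ_m(ΔS)_n · Ψ_{m−1}(Δ⁴S)_{n+1} = Ψ_m(Δ²S)_n · Ψ_{m−1}(Δ³S)_{n+1} holds. (This is the bilinear relation F_k^n G_k^{n+1} − F_k^{n+1} G_k^n = F_{k+1}^n F_{k−1}^{n+1} of the lattice Boussinesq molecule solution in the case k = 3m+1.) -/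
/-!
`Psi k v n` is the Casorati determinant of the sequences `Δ^[2 i] v`, `i < k`. Bordering the
Casorati matrix of sequences `w₀, …, w_k` with a row of ones and subtracting adjacent columns
turns its determinant into the Casorati determinant of the `Δ wᵢ`. The Desnanot–Jacobi identity
for the bordered matrix, with rows `0, 1` and the first and last columns deleted, is therefore a
three-term relation between Casorati determinants; for `wᵢ = Δ^[2 i + 1] S` it is the theorem.

Desnanot–Jacobi is proved for `det A ≠ 0` over a domain by multiplying `A` on the left by the
matrix whose rows `0, 1` are the rows `0, last` of `adjugate A` and which is the identity
elsewhere, and then for every matrix by specialising the generic matrix `mvPolynomialX`.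
-/

namespace Matrix

variable {R : Type*} [CommRing R] {k : ℕ}

theorem det_updateRow_single_one (A : Matrix (Fin (k + 1)) (Fin (k + 1)) R) (i j : Fin (k + 1)) :
    (A.updateRow i (Pi.single j 1)).det
      = (-1) ^ (i + j : ℕ) * (A.submatrix i.succAbove j.succAbove).det :=
  (adjugate_apply A j i).symm.trans (adjugate_fin_succ_eq_det_submatrix A j i)

theorem det_eq_det_sub_of_row_zero_eq_one (M : Matrix (Fin (k + 1)) (Fin (k + 1)) R)
    (h : ∀ j, M 0 j = 1) :
    M.det = (of fun i j : Fin k => M i.succ j.succ - M i.succ j.castSucc).det := by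
  let B : Matrix (Fin (k + 1)) (Fin (k + 1)) R :=
    of fun i => Fin.cons (M i 0) fun j => M i j.succ - M i j.castSucc
  have hB0 : B 0 = Pi.single 0 1 := by
    ext j
    refine Fin.cases ?_ (fun j => ?_) j <;> simp [B, h]
  have hcol : M.det = B.det :=
    det_eq_of_forall_col_eq_smul_add_pred (fun _ => 1) (fun _ => rfl) fun i j => by simp [B]
  rw [hcol, ← updateRow_eq_self B 0, hB0, det_updateRow_single_one, Fin.succAbove_zero]
  simp only [Fin.val_zero, add_zero, pow_zero, one_mul]
  rfl

theorem det_eq_of_forall_row_succ_succ_eq_one (M : Matrix (Fin (k + 2)) (Fin (k + 2)) R)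
    (h : ∀ i : Fin k, M i.succ.succ = (1 : Matrix (Fin (k + 2)) (Fin (k + 2)) R) i.succ.succ) :
    M.det = M 0 0 * M 1 1 - M 0 1 * M 1 0 := by
  induction k with
  | zero => exact det_fin_two M
  | succ k ih =>
    have hlast : M (Fin.last _) = Pi.single (Fin.last _) 1 :=
      funext fun j => (congrFun (h (Fin.last k)) j).trans one_eq_pi_single
    conv_lhs => rw [← updateRow_eq_self M (Fin.last _), hlast]
    rw [det_updateRow_single_one, Fin.succAbove_last, ← two_mul, pow_mul, neg_one_sq,
      one_pow, one_mul, ih]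
    · rfl
    · intro i
      ext j
      have hi : i.castSucc.succ.succ = i.succ.succ.castSucc := rfl
      have hrow := congrFun (h i.castSucc) j.castSucc
      rw [hi] at hrow
      exact hrow.trans (by simp only [one_apply, Fin.castSucc_inj])

theorem adjugate_row_vecMul (A : Matrix (Fin k) (Fin k) R) (i : Fin k) :
    A.adjugate i ᵥ* A = A.det • Pi.single i 1 := by
  rw [← mul_apply_eq_vecMul, adjugate_mul]
  ext j
  simp [one_eq_pi_single]

theorem det_updateRow_zero_updateRow_one_single (A : Matrix (Fin (k + 2)) (Fin (k + 2)) R) :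
    ((A.updateRow 0 (Pi.single 0 1)).updateRow 1 (Pi.single (Fin.last _) 1)).det
      = (-1) ^ k * (A.submatrix (fun i : Fin k => i.succ.succ) (fun j => j.castSucc.succ)).det := by
  have hrows : (Fin.succAbove 1 ∘ Fin.succ : Fin k → Fin (k + 2)) = fun i => i.succ.succ :=
    funext Fin.one_succAbove_succ
  have hsub : (A.updateRow 0 (Pi.single 0 1)).submatrix (Fin.succAbove 1) Fin.castSucc
      = (A.submatrix (Fin.succAbove 1) Fin.castSucc).updateRow 0 (Pi.single 0 1) := by
    ext i j
    refine Fin.cases ?_ (fun i => ?_) i <;> simp [updateRow_apply, Pi.single_apply]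
  rw [det_updateRow_single_one, Fin.succAbove_last, hsub, det_updateRow_single_one,
    Fin.succAbove_zero, submatrix_submatrix, hrows]
  simp only [Fin.val_zero, Fin.val_one, Fin.val_last]
  rw [← mul_assoc, show (-1 : R) ^ (1 + (k + 1)) * (-1) ^ (0 + 0) = (-1) ^ k by ring]
  rfl

theorem desnanot_jacobi_of_det_ne_zero [IsDomain R] (A : Matrix (Fin (k + 2)) (Fin (k + 2)) R)
    (hA : A.det ≠ 0) :
    (A.submatrix Fin.succ Fin.succ).det * (A.submatrix (Fin.succAbove 1) Fin.castSucc).det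
      - (A.submatrix (Fin.succAbove 1) Fin.succ).det * (A.submatrix Fin.succ Fin.castSucc).det
      = A.det * (A.submatrix (fun i : Fin k => i.succ.succ) (fun j => j.castSucc.succ)).det := by
  set B : Matrix (Fin (k + 2)) (Fin (k + 2)) R :=
    ((1 : Matrix _ _ R).updateRow 0 (A.adjugate 0)).updateRow 1 (A.adjugate (Fin.last _))
  have hB : B.det = A.adjugate 0 0 * A.adjugate (Fin.last _) 1
      - A.adjugate 0 1 * A.adjugate (Fin.last _) 0 := by
    rw [det_eq_of_forall_row_succ_succ_eq_one]
    · simp [B]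
    · intro i
      ext j
      simp [B, updateRow_apply, Fin.ext_iff]
  have hBA : B * A = (A.updateRow 0 (A.det • Pi.single 0 1)).updateRow 1
      (A.det • Pi.single (Fin.last _) 1) := by
    simp only [B, updateRow_mul, Matrix.one_mul, adjugate_row_vecMul]
  have hdetBA : B.det * A.det = A.det * (A.det * (-1) ^ k *
      (A.submatrix (fun i : Fin k => i.succ.succ) (fun j => j.castSucc.succ)).det) := by
    rw [← det_mul, hBA, det_updateRow_smul, updateRow_comm _ (by simp), det_updateRow_smul,
      updateRow_comm _ (by simp), det_updateRow_zero_updateRow_one_single]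
    ring
  have hdetB : B.det = A.det * (-1) ^ k *
      (A.submatrix (fun i : Fin k => i.succ.succ) (fun j => j.castSucc.succ)).det :=
    mul_right_cancel₀ hA (hdetBA.trans (mul_comm _ _))
  simp only [hB, adjugate_fin_succ_eq_det_submatrix, Fin.val_zero, Fin.val_one, Fin.val_last,
    Fin.succAbove_zero, Fin.succAbove_last] at hdetB
  refine mul_left_cancel₀ (pow_ne_zero k (neg_ne_zero.mpr one_ne_zero)) ?_
  linear_combination hdetB

theorem desnanot_jacobi (A : Matrix (Fin (k + 2)) (Fin (k + 2)) R) :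
    (A.submatrix Fin.succ Fin.succ).det * (A.submatrix (Fin.succAbove 1) Fin.castSucc).det
      - (A.submatrix (Fin.succAbove 1) Fin.succ).det * (A.submatrix Fin.succ Fin.castSucc).det
      = A.det * (A.submatrix (fun i : Fin k => i.succ.succ) (fun j => j.castSucc.succ)).det := by
  let f := MvPolynomial.eval₂Hom (Int.castRingHom R)
    fun p : Fin (k + 2) × Fin (k + 2) => A p.1 p.2
  have hA : (mvPolynomialX (Fin (k + 2)) (Fin (k + 2)) ℤ).map f = A :=
    mvPolynomialX_map_eval₂ _ A
  have hgeneric := congrArg f <|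
    desnanot_jacobi_of_det_ne_zero _ (det_mvPolynomialX_ne_zero (Fin (k + 2)) ℤ)
  simpa only [map_sub, map_mul, RingHom.map_det, RingHom.mapMatrix_apply, ← submatrix_map, hA]
    using hgeneric

end Matrix

open Matrix

def casorati {ι : Type*} {m : ℕ} (w : ι → ℕ → ℝ) (n : ℕ) : Matrix ι (Fin m) ℝ :=
  of fun i j => w i (n + j)

def borderedCasorati {k : ℕ} (w : Fin k → ℕ → ℝ) (n : ℕ) :
    Matrix (Fin (k + 1)) (Fin (k + 1)) ℝ :=
  of fun i j => vecCons 1 (fun i => w i (n + j)) i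

theorem psi_eq_det_casorati (k : ℕ) (v : ℕ → ℝ) (n : ℕ) :
    Psi k v n = (casorati (fun i : Fin k => Δ^[2 * i.val] v) n).det :=
  rfl

theorem det_borderedCasorati {k : ℕ} (w : Fin k → ℕ → ℝ) (n : ℕ) :
    (borderedCasorati w n).det = (casorati (fun i => Δ (w i)) n).det := by
  rw [det_eq_det_sub_of_row_zero_eq_one _ fun _ => rfl]
  rfl

theorem det_casorati_jacobi {k : ℕ} (w : Fin (k + 1) → ℕ → ℝ) (n : ℕ) :
    (casorati w (n + 1)).det * (casorati (fun i => Δ (w i.succ)) n).det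
      - (casorati w n).det * (casorati (fun i => Δ (w i.succ)) (n + 1)).det
      = (casorati (fun i => Δ (w i)) n).det * (casorati (fun i => w i.succ) (n + 1)).det := by
  have h := desnanot_jacobi (borderedCasorati w n)
  have h₁ : (borderedCasorati w n).submatrix Fin.succ Fin.succ = casorati w (n + 1) := by
    ext i j
    simp [borderedCasorati, casorati, add_right_comm, add_assoc]
  have h₂ : (borderedCasorati w n).submatrix Fin.succ Fin.castSucc = casorati w n := rfl
  have h₃ : (borderedCasorati w n).submatrix (Fin.succAbove 1) Fin.castSucc
      = borderedCasorati (fun i => w i.succ) n := by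
    ext i j
    refine Fin.cases ?_ (fun i => ?_) i <;> simp [borderedCasorati]
  have h₄ : (borderedCasorati w n).submatrix (Fin.succAbove 1) Fin.succ
      = borderedCasorati (fun i => w i.succ) (n + 1) := by
    ext i j
    refine Fin.cases ?_ (fun i => ?_) i <;> simp [borderedCasorati, add_right_comm, add_assoc]
  have h₅ : (borderedCasorati w n).submatrix (fun i : Fin k => i.succ.succ)
      (fun j => j.castSucc.succ) = casorati (fun i => w i.succ) (n + 1) := by
    ext i j
    simp [borderedCasorati, casorati, add_right_comm, add_assoc]
  simp only [h₁, h₂, h₃, h₄, h₅, det_borderedCasorati] at h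
  linear_combination h

theorem stmt1 (S : ℕ → ℝ) (m : ℕ) (hm : 1 ≤ m) (n : ℕ) :
    Psi m (Δ S) (n + 1) * Psi (m - 1) (Δ^[4] S) n
      - Psi m (Δ S) n * Psi (m - 1) (Δ^[4] S) (n + 1)
      = Psi m (Δ^[2] S) n * Psi (m - 1) (Δ^[3] S) (n + 1) := by
  obtain ⟨k, rfl⟩ := Nat.exists_eq_add_of_le' hm
  have h := det_casorati_jacobi (fun i : Fin (k + 1) => Δ^[2 * i.val] (Δ S)) n
  have hΔ₄ : (fun i : Fin k => Δ (Δ^[2 * i.succ.val] (Δ S)))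
      = fun i => Δ^[2 * i.val] (Δ^[4] S) := by
    funext i
    rw [← Function.iterate_succ_apply' Δ, ← Function.iterate_succ_apply,
      ← Function.iterate_add_apply, Fin.val_succ]
    congr 2
  have hΔ₂ : (fun i : Fin (k + 1) => Δ (Δ^[2 * i.val] (Δ S)))
      = fun i => Δ^[2 * i.val] (Δ^[2] S) := by
    funext i
    rw [← Function.iterate_succ_apply' Δ, ← Function.iterate_succ_apply,
      ← Function.iterate_add_apply]
  have hΔ₃ : (fun i : Fin k => Δ^[2 * i.succ.val] (Δ S))
      = fun i => Δ^[2 * i.val] (Δ^[3] S) := by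
    funext i
    rw [← Function.iterate_succ_apply, ← Function.iterate_add_apply, Fin.val_succ]
    congr 2
  rw [hΔ₄, hΔ₂, hΔ₃] at h
  simpa only [Nat.add_sub_cancel, psi_eq_det_casorati] using h
end

section
/- For every integer m ≥ 1 and every n ∈ ℕ, the determinantal identity Ψ_m(Δ³S)_n · Ψ_m(S)_{n+1} − Ψ_{m−1}(Δ³S)_{n+1} · Ψ_{m+1}(S)_n = Ψ_m(Δ²S)_{n+1} · Ψ_m(ΔS)_n holds. (This is the bilinear relation F_{k+2}^n G_{k−1}^{n+1} − F_{k−1}^{n+1} G_{k+2}^n = F_{k+1}^{n+1} F_k^n of the lattice Boussinesq molecule solution in the case k = 3m+1.) -/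
namespace Matrix

variable {R : Type*} [CommRing R]

def diffCols {ι : Type*} {k : ℕ} (M : Matrix ι (Fin (k + 1)) R) : Matrix ι (Fin (k + 1)) R :=
  of fun i => Fin.cons (M i 0) fun j => M i j.succ - M i j.castSucc

theorem diffCols_eq_mul {ι : Type*} {k : ℕ} (M : Matrix ι (Fin (k + 1)) R) :
    diffCols M
      = M * (1 - of fun a b : Fin (k + 1) => if a.val + 1 = b.val then (1 : R) else 0) := by
  ext i j
  cases j using Fin.cases with
  | zero => simp [diffCols, mul_apply, one_apply]
  | succ j =>
    have hprev : ∀ b : Fin (k + 1), b.val = j.val ↔ b = j.castSucc := by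
      simp [Fin.ext_iff]
    simp [diffCols, mul_sub, mul_apply, one_apply, hprev]

theorem det_diffCols {k : ℕ} (M : Matrix (Fin (k + 1)) (Fin (k + 1)) R) :
    (diffCols M).det = M.det := by
  rw [diffCols_eq_mul, det_mul, det_of_isUpperTriangular (M := 1 - _), Finset.prod_eq_one,
    mul_one]
  · simp
  · intro a b (hab : b < a)
    simp [hab.ne', show a.val + 1 ≠ b.val by omega]

theorem det_of_cons_add {k : ℕ} (a b : Fin (k + 1) → R) (M : Matrix (Fin (k + 1)) (Fin k) R) :
    (of fun i => Fin.cons (a i + b i) (M i) : Matrix (Fin (k + 1)) (Fin (k + 1)) R).det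
      = (of fun i => Fin.cons (a i) (M i)).det + (of fun i => Fin.cons (b i) (M i)).det := by
  simp only [det_succ_column_zero, ← Finset.sum_add_distrib]
  congr! 1 with i
  simp [submatrix, add_mul, mul_add]

theorem det_updateCol_single {k : ℕ} (M : Matrix (Fin (k + 1)) (Fin (k + 1)) R)
    (i j : Fin (k + 1)) :
    (M.updateCol j (Pi.single i 1)).det
      = (-1) ^ (i.val + j.val) * (M.submatrix i.succAbove j.succAbove).det := by
  rw [det_succ_column _ j, Finset.sum_eq_single i]
  · simp [submatrix_updateCol_succAbove]
  · intro b _ hb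
    simp [hb]
  · simp

theorem det_one_updateCol_updateCol {k : ℕ} (u v : Fin (k + 2) → R) :
    (((1 : Matrix (Fin (k + 2)) (Fin (k + 2)) R).updateCol 0 u).updateCol 1 v).det
      = u 0 * v 1 - u 1 * v 0 := by
  -- A rank-two perturbation of `1`, so `det_one_add_mul_comm` reduces it to a `2 × 2` determinant.
  let U : Matrix (Fin (k + 2)) (Fin 2) R := of fun i =>
    ![u i - (1 : Matrix (Fin (k + 2)) (Fin (k + 2)) R) i 0,
      v i - (1 : Matrix (Fin (k + 2)) (Fin (k + 2)) R) i 1]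
  let V : Matrix (Fin 2) (Fin (k + 2)) R :=
    of ![(1 : Matrix (Fin (k + 2)) (Fin (k + 2)) R) 0, (1 : Matrix (Fin (k + 2)) (Fin (k + 2)) R) 1]
  have hUV : ((1 : Matrix (Fin (k + 2)) (Fin (k + 2)) R).updateCol 0 u).updateCol 1 v
      = 1 + U * V := by
    ext i j
    by_cases h1 : j = 1
    · subst h1; simp [U, V, mul_apply, Fin.sum_univ_two, one_apply]
    by_cases h0 : j = 0
    · subst h0; simp [U, V, mul_apply, Fin.sum_univ_two, one_apply]
    simp [U, V, mul_apply, Fin.sum_univ_two, one_apply, h0, h1, Ne.symm h0, Ne.symm h1]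
  rw [hUV, det_one_add_mul_comm, det_fin_two]
  simp only [add_apply, mul_apply, U, V, of_apply, cons_val_zero, cons_val_one]
  simp [one_apply, mul_comm]

theorem mulVec_adjugate_col {n : Type*} [Fintype n] [DecidableEq n] (C : Matrix n n R) (x : n) :
    C *ᵥ (fun i => C.adjugate i x) = C.det • Pi.single x 1 := by
  ext i
  have hCx := congrFun₂ (mul_adjugate C) i x
  simp only [mul_apply, smul_apply, one_apply] at hCx
  simp [mulVec, dotProduct, hCx, Pi.single_apply]

theorem det_mul_desnanot_jacobi {l : ℕ} (C : Matrix (Fin (l + 2)) (Fin (l + 2)) R) :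
    C.det * ((C.submatrix Fin.succ Fin.succ).det * (C.submatrix Fin.castSucc (Fin.succAbove 1)).det
      - (C.submatrix Fin.succ (Fin.succAbove 1)).det * (C.submatrix Fin.castSucc Fin.succ).det)
    = C.det * (C.det * (C.submatrix (Fin.succ ∘ Fin.castSucc) (Fin.succ ∘ Fin.succ)).det) := by
  -- Multiply `C` by the identity with columns `0, 1` replaced by columns `0, last` of `adj C`:
  -- the product has columns `det C • e₀` and `det C • e_last` there and agrees with `C` elsewhere,
  -- so expanding both sides of `det (C * B) = det C * det B` gives the identity.
  set u : Fin (l + 2) → R := fun i => C.adjugate i 0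
  set v : Fin (l + 2) → R := fun i => C.adjugate i (Fin.last (l + 1))
  have hCB : C * ((1 : Matrix (Fin (l + 2)) (Fin (l + 2)) R).updateCol 0 u).updateCol 1 v
      = (C.updateCol 0 (C.det • Pi.single 0 1)).updateCol 1
          (C.det • Pi.single (Fin.last (l + 1)) 1) := by
    rw [mul_updateCol, mul_updateCol, mul_one, mulVec_adjugate_col, mulVec_adjugate_col]
  have hminor : (C.updateCol 0 (Pi.single 0 1)).submatrix Fin.castSucc (Fin.succAbove 1)
      = (C.submatrix Fin.castSucc (Fin.succAbove 1)).updateCol 0 (Pi.single 0 1) := by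
    ext i j
    cases j using Fin.cases with
    | zero => simp [Pi.single_apply]
    | succ j => simp [Fin.succ_ne_zero]
  have hdet := congrArg det hCB
  rw [det_mul, det_one_updateCol_updateCol, det_updateCol_smul, updateCol_comm _ (by simp),
    det_updateCol_smul, updateCol_comm _ (by simp), det_updateCol_single, Fin.succAbove_last,
    hminor, det_updateCol_single, submatrix_submatrix] at hdet
  simp only [u, v, adjugate_fin_succ_eq_det_submatrix, Fin.succAbove_zero, Fin.succAbove_last]
    at hdet
  have hrows : (Fin.castSucc ∘ Fin.succ : Fin l → Fin (l + 2)) = Fin.succ ∘ Fin.castSucc :=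
    funext Fin.succ_castSucc
  have hcols : (Fin.succAbove 1 ∘ Fin.succ : Fin l → Fin (l + 2)) = Fin.succ ∘ Fin.succ :=
    funext Fin.one_succAbove_succ
  simp only [hrows, hcols, Fin.val_last, Fin.val_zero, Fin.val_one, pow_add] at hdet
  rcases neg_one_pow_eq_or R l with h | h <;> rw [h] at hdet
  · linear_combination hdet
  · linear_combination -hdet

theorem desnanot_jacobi_s4 {l : ℕ} (C : Matrix (Fin (l + 2)) (Fin (l + 2)) R) :
    (C.submatrix Fin.succ Fin.succ).det * (C.submatrix Fin.castSucc (Fin.succAbove 1)).det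
      - (C.submatrix Fin.succ (Fin.succAbove 1)).det * (C.submatrix Fin.castSucc Fin.succ).det
    = C.det * (C.submatrix (Fin.succ ∘ Fin.castSucc) (Fin.succ ∘ Fin.succ)).det := by
  -- Cancel `det C` for the generic matrix, whose determinant is a nonzero element of a domain.
  let X := mvPolynomialX (Fin (l + 2)) (Fin (l + 2)) ℤ
  have generic := mul_left_cancel₀ (det_mvPolynomialX_ne_zero _ ℤ) (det_mul_desnanot_jacobi X)
  let φ := MvPolynomial.aeval (R := ℤ) fun p : Fin (l + 2) × Fin (l + 2) => C p.1 p.2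
  have hXC : X.map φ = C := mvPolynomialX_mapMatrix_aeval ℤ C
  simpa only [map_sub, map_mul, AlgHom.map_det, AlgHom.mapMatrix_apply, ← submatrix_map, hXC]
    using congrArg φ generic

end Matrix

open Matrix

def casoratiMatrix {ι : Type*} (k : ℕ) (g : ι → ℕ → ℝ) (n : ℕ) : Matrix ι (Fin k) ℝ :=
  of fun i j => g i (n + j)

theorem Psi_iterate_eq_det_casoratiMatrix (k b : ℕ) (v : ℕ → ℝ) (n : ℕ) :
    Psi k (Δ^[b] v) n = (casoratiMatrix k (fun i : Fin k => Δ^[2 * i + b] v) n).det := by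
  simp only [Psi, casoratiMatrix, Function.iterate_add_apply]

section

variable {ι κ : Type*} {k : ℕ} (g : ι → ℕ → ℝ) (n : ℕ)

theorem diffCols_casoratiMatrix_submatrix_succ (r : κ → ι) :
    (diffCols (casoratiMatrix (k + 1) g n)).submatrix r Fin.succ
      = casoratiMatrix k (fun i => Δ (g (r i))) n :=
  rfl

theorem diffCols_casoratiMatrix_submatrix_succ_succ (r : κ → ι) :
    (diffCols (casoratiMatrix (k + 2) g n)).submatrix r (Fin.succ ∘ Fin.succ)
      = casoratiMatrix k (fun i => Δ (g (r i))) (n + 1) := by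
  ext i j
  simp only [diffCols, casoratiMatrix, Δ, submatrix_apply, of_apply, Function.comp_apply,
    Fin.cons_succ, Fin.val_succ, Fin.val_castSucc]
  ring_nf

end

theorem det_casoratiMatrix_succ {k : ℕ} (g : Fin (k + 1) → ℕ → ℝ) (n : ℕ) :
    (casoratiMatrix (k + 1) g (n + 1)).det
      = ((diffCols (casoratiMatrix (k + 2) g n)).submatrix id (Fin.succAbove 1)).det
        + ((diffCols (casoratiMatrix (k + 2) g n)).submatrix id Fin.succ).det := by
  set M := casoratiMatrix k (fun i => Δ (g i)) (n + 1)
  have hshift : diffCols (casoratiMatrix (k + 1) g (n + 1))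
      = of fun i => Fin.cons (g i n + Δ (g i) n) (M i) := by
    ext i j
    cases j using Fin.cases <;>
      simp [diffCols, casoratiMatrix, M, Δ, ← add_assoc, add_right_comm n 1]
  have hfirst : (diffCols (casoratiMatrix (k + 2) g n)).submatrix id (Fin.succAbove 1)
      = of fun i => Fin.cons (g i n) (M i) := by
    ext i j
    cases j using Fin.cases <;>
      simp [diffCols, casoratiMatrix, M, Δ, ← add_assoc, add_right_comm n 1]
  have hsecond : (diffCols (casoratiMatrix (k + 2) g n)).submatrix id Fin.succ
      = of fun i => Fin.cons (Δ (g i) n) (M i) := by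
    ext i j
    cases j using Fin.cases <;>
      simp [diffCols, casoratiMatrix, M, Δ, ← add_assoc, add_right_comm n 1]
  rw [← det_diffCols, hshift, hfirst, hsecond, det_of_cons_add]

theorem stmt4 (S : ℕ → ℝ) (m : ℕ) (hm : 1 ≤ m) (n : ℕ) :
    Psi m (Δ^[3] S) n * Psi m S (n + 1)
      - Psi (m - 1) (Δ^[3] S) (n + 1) * Psi (m + 1) S n
      = Psi m (Δ^[2] S) (n + 1) * Psi m (Δ S) n := by
  obtain ⟨l, rfl⟩ : ∃ l, m = l + 1 := ⟨m - 1, by omega⟩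
  set g : Fin (l + 2) → ℕ → ℝ := fun i => Δ^[2 * i] S
  set C := diffCols (casoratiMatrix (l + 2) g n)
  have hS : Psi (l + 2) S n = C.det := (det_diffCols _).symm
  have hS' : Psi (l + 1) S (n + 1) = (C.submatrix Fin.castSucc (Fin.succAbove 1)).det
      + (C.submatrix Fin.castSucc Fin.succ).det :=
    det_casoratiMatrix_succ (g ∘ Fin.castSucc) n
  have hΔ2S' : Psi (l + 1) (Δ^[2] S) (n + 1) = (C.submatrix Fin.succ (Fin.succAbove 1)).det
      + (C.submatrix Fin.succ Fin.succ).det := by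
    rw [Psi_iterate_eq_det_casoratiMatrix]
    exact det_casoratiMatrix_succ (g ∘ Fin.succ) n
  have hΔS : Psi (l + 1) (Δ S) n = (C.submatrix Fin.castSucc Fin.succ).det := by
    rw [← Function.iterate_one Δ, Psi_iterate_eq_det_casoratiMatrix,
      diffCols_casoratiMatrix_submatrix_succ]
    simp only [g, ← Function.iterate_succ_apply' Δ]
    rfl
  have hΔ3S : Psi (l + 1) (Δ^[3] S) n = (C.submatrix Fin.succ Fin.succ).det := by
    rw [Psi_iterate_eq_det_casoratiMatrix, diffCols_casoratiMatrix_submatrix_succ]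
    simp only [g, ← Function.iterate_succ_apply' Δ]
    rfl
  have hΔ3S' : Psi l (Δ^[3] S) (n + 1)
      = (C.submatrix (Fin.succ ∘ Fin.castSucc) (Fin.succ ∘ Fin.succ)).det := by
    rw [Psi_iterate_eq_det_casoratiMatrix, diffCols_casoratiMatrix_submatrix_succ_succ]
    simp only [g, ← Function.iterate_succ_apply' Δ]
    rfl
  rw [Nat.add_sub_cancel, hS, hS', hΔ2S', hΔS, hΔ3S, hΔ3S']
  linear_combination desnanot_jacobi_s4 C
end

section
/- For every integer m ≥ 1 and every n ∈ ℕ, the determinantal identity Ψ_m(ΔS)_{n+1} · Ψ_m(Δ⁴S)_n − Ψ_{m+1}(ΔS)_n · Ψ_{m−1}(Δ⁴S)_{n+1} = Ψ_m(Δ³S)_{n+1} · Ψ_m(Δ²S)_n holds. (This is the bilinear relation F_{k+2}^n G_{k−1}^{n+1} − F_{k−1}^{n+1} G_{k+2}^n = F_{k+1}^{n+1} F_k^n of the lattice Boussinesq molecule solution in the case k = 3m+2.) -/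
/-!
Expanding `(Δ^[2i] v) (n + j)` binomially in `j` is a unitriangular column operation, so
`Psi k v n = det (Δ^[2i+j] v n)`. Put `m = p + 1`, `f r = Δ^[r+1] S n` and
`g r = Δ^[r+1] S (n+1)`, so that `g r = f r + f (r+1)`. Bordering an `f`-determinant by the
alternating row `((-1)^j)_j` and adding each column to the next turns it into the matching
`g`-determinant, up to sign. The identity is then a three-term relation: the `p + 2` rows
`(f (2x + j))_j`, `x ≤ p + 1`, together with the alternating row are `p + 3` vectors in dimension
`p + 2`, so `∑ₓ (-1)^x Dₓ rowₓ = 0` with `Dₓ` the complementary maximal minors; applying a linear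
functional that kills the `p` interior rows leaves exactly three terms, which are the three
products of the identity.
-/

open Matrix Finset

section Determinants

variable {R : Type*} [CommRing R]

theorem det_pascal (k : ℕ) : (of fun t j : Fin k => ((j : ℕ).choose t : R)).det = 1 := by
  rw [det_of_isUpperTriangular]
  · simp
  · intro i j hji
    simp [Nat.choose_eq_zero_of_lt (show (j : ℕ) < i from hji)]

theorem det_shift_eq_det_fwdDiff_iter {k : ℕ} (x : Fin k → ℕ → R) (n : ℕ) :
    (of fun i j : Fin k => x i (n + j)).det =
      (of fun i j : Fin k => (fwdDiff 1)^[j] (x i) n).det := by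
  have hpascal : (of fun i j : Fin k => x i (n + j)) =
      (of fun i j : Fin k => (fwdDiff 1)^[j] (x i) n) *
        of fun t j : Fin k => ((j : ℕ).choose t : R) := by
    ext i j
    have hk : range (j + 1) ⊆ range k := range_subset_range.mpr j.isLt
    have hbinom := shift_eq_sum_fwdDiff_iter 1 (x i) j n
    rw [smul_eq_mul, mul_one, sum_subset hk fun t _ ht => by
      rw [Nat.choose_eq_zero_of_lt (by simpa using ht), zero_smul]] at hbinom
    simp [hbinom, mul_apply, ← Fin.sum_univ_eq_sum_range, mul_comm]
  rw [hpascal, det_mul, det_pascal, mul_one]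

variable (R) in
def bidiagonalOnes (k : ℕ) : Matrix (Fin (k + 1)) (Fin (k + 1)) R :=
  of fun a b => (if a = b then 1 else 0) + if (a : ℕ) + 1 = b then 1 else 0

theorem det_bidiagonalOnes (k : ℕ) : (bidiagonalOnes R k).det = 1 := by
  rw [det_of_isUpperTriangular]
  · simp [bidiagonalOnes]
  · intro a b (hba : b < a)
    have : (b : ℕ) < a := hba
    simp only [bidiagonalOnes, of_apply, if_neg hba.ne', if_neg (show (a : ℕ) + 1 ≠ b by omega),
      add_zero]

theorem mul_bidiagonalOnes_apply_zero {k : ℕ} (B : Matrix (Fin (k + 1)) (Fin (k + 1)) R)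
    (x : Fin (k + 1)) : (B * bidiagonalOnes R k) x 0 = B x 0 := by
  simp [mul_apply, bidiagonalOnes]

theorem mul_bidiagonalOnes_apply_succ {k : ℕ} (B : Matrix (Fin (k + 1)) (Fin (k + 1)) R)
    (x : Fin (k + 1)) (j : Fin k) :
    (B * bidiagonalOnes R k) x j.succ = B x j.castSucc + B x j.succ := by
  have hj : ∀ a : Fin (k + 1), (a : ℕ) = j ↔ a = j.castSucc := by simp [Fin.ext_iff]
  simp [mul_apply, bidiagonalOnes, mul_add, sum_add_distrib, hj, add_comm]

theorem det_snoc_neg_one_pow {k : ℕ} (h : Fin k → Fin (k + 1) → R) (s : ℕ) :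
    (of (Fin.snoc h fun c : Fin (k + 1) => (-1 : R) ^ (c + s : ℕ))).det =
      (-1) ^ (k + s) * (of fun i j : Fin k => h i j.castSucc + h i j.succ).det := by
  set B : Matrix (Fin (k + 1)) (Fin (k + 1)) R := of (Fin.snoc h fun c => (-1 : R) ^ (c + s : ℕ))
  have hdet : B.det = (B * bidiagonalOnes R k).det := by
    rw [det_mul, det_bidiagonalOnes, mul_one]
  -- After adding each column to the next, the alternating last row becomes `((-1)^s, 0, …, 0)`.
  have hlast : ∀ j : Fin k, (B * bidiagonalOnes R k) (Fin.last k) j.succ = 0 := fun j => by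
    simp only [B, mul_bidiagonalOnes_apply_succ, of_apply, Fin.snoc_last, Fin.val_castSucc,
      Fin.val_succ]
    ring
  have hminor :
      (B * bidiagonalOnes R k).submatrix (Fin.last k).succAbove (0 : Fin (k + 1)).succAbove =
        of fun i j : Fin k => h i j.castSucc + h i j.succ := by
    ext i j
    simp [B, mul_bidiagonalOnes_apply_succ]
  rw [hdet, det_succ_row _ (Fin.last k), Fin.sum_univ_succ,
    sum_eq_zero fun j _ => by rw [hlast, mul_zero, zero_mul], add_zero,
    mul_bidiagonalOnes_apply_zero, hminor]
  simp [B, pow_add]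

theorem det_snoc_tail_zero {k : ℕ} (w : Fin (k + 1) → Fin (k + 1) → R) :
    (of (Fin.snoc (Fin.tail w) (w 0))).det = (-1) ^ k * (of w).det := by
  have hrot : of (Fin.snoc (Fin.tail w) (w 0)) = (of w).submatrix (finRotate (k + 1)) id := by
    rw [Fin.snoc_eq_cons_rotate, Fin.cons_self_tail]
    rfl
  rw [hrot, det_permute, sign_finRotate]
  simp

def detSnocLinear {k : ℕ} (A : Fin k → Fin (k + 1) → R) : (Fin (k + 1) → R) →ₗ[R] R :=
  detRowAlternating.toMultilinearMap.toLinearMap (Fin.snoc A 0) (Fin.last k)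

theorem detSnocLinear_apply {k : ℕ} (A : Fin k → Fin (k + 1) → R) (v : Fin (k + 1) → R) :
    detSnocLinear A v = (of (Fin.snoc A v)).det := by
  simp only [detSnocLinear, MultilinearMap.toLinearMap_apply, Fin.update_snoc_last,
    AlternatingMap.coe_multilinearMap]
  rfl

theorem sum_det_succAbove_smul_eq_zero {q : ℕ} (N : Fin (q + 1) → Fin q → R) :
    ∑ x : Fin (q + 1), ((-1) ^ (x : ℕ) * (of fun i => N (x.succAbove i)).det) • N x = 0 := by
  ext c
  -- Expand along the last column a matrix whose last column repeats column `c`.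
  let P : Matrix (Fin (q + 1)) (Fin (q + 1)) R := of fun x => Fin.snoc (N x) (N x c)
  have hP : P.det = 0 :=
    det_zero_of_column_eq (Fin.castSucc_lt_last c).ne fun x => by simp [P]
  have hminor : ∀ x : Fin (q + 1),
      P.submatrix x.succAbove (Fin.last q).succAbove = of fun i => N (x.succAbove i) := by
    intro x
    ext i j
    simp [P]
  rw [det_succ_column P (Fin.last q)] at hP
  simp only [Finset.sum_apply, Pi.smul_apply, smul_eq_mul, Pi.zero_apply]
  rw [← neg_one_pow_mul_eq_zero_iff (n := q), ← hP, mul_sum]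
  refine sum_congr rfl fun x _ => ?_
  rw [hminor, Fin.val_last, pow_add]
  simp only [P, of_apply, Fin.snoc_last]
  ring

theorem three_term_relation {p : ℕ} (u : Fin (p + 2) → Fin (p + 2) → R) (c : Fin (p + 2) → R)
    (φ : (Fin (p + 2) → R) →ₗ[R] R) (hφ : ∀ i : Fin p, φ (u i.succ.castSucc) = 0) :
    (of (Fin.snoc (Fin.tail u) c)).det * φ (u 0)
      - (-1) ^ p * ((of (Fin.snoc (Fin.init u) c)).det * φ (u (Fin.last _)))
      + (-1) ^ p * ((of u).det * φ c) = 0 := by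
  let N : Fin (p + 3) → Fin (p + 2) → R := Fin.snoc u c
  have hfirst : (fun i => N ((0 : Fin (p + 3)).succAbove i)) = Fin.snoc (Fin.tail u) c := by
    ext i : 1
    cases i using Fin.lastCases <;> simp [N, Fin.tail, Fin.succ_castSucc, -Fin.castSucc_succ]
  have hsecondLast :
      (fun i => N ((Fin.last (p + 1)).castSucc.succAbove i)) = Fin.snoc (Fin.init u) c := by
    ext i : 1
    cases i using Fin.lastCases <;> simp [N, Fin.init]
  have hlast : (fun i => N ((Fin.last (p + 2)).succAbove i)) = u := by
    ext i : 1
    simp [N]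
  have h := congrArg φ (sum_det_succAbove_smul_eq_zero N)
  rw [map_sum, map_zero, Fin.sum_univ_castSucc, Fin.sum_univ_castSucc, Fin.sum_univ_succ,
    sum_eq_zero fun i _ => by rw [map_smul, show N i.succ.castSucc.castSucc = u i.succ.castSucc
      from Fin.snoc_castSucc .., hφ, smul_zero], Fin.castSucc_zero, Fin.castSucc_zero] at h
  simp only [map_smul, smul_eq_mul, hfirst, hsecondLast, hlast] at h
  simp only [Fin.coe_ofNat_eq_mod, Nat.zero_mod, pow_zero, one_mul, Fin.snoc_apply_zero, add_zero,
    Fin.val_castSucc, Fin.val_last, pow_succ, mul_neg, mul_one, neg_mul, Fin.snoc_castSucc,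
    neg_neg, Fin.snoc_last, N] at h
  linear_combination h

def psiDet (k : ℕ) (f : ℕ → R) : R := (of fun i j : Fin k => f (2 * i + j)).det

theorem det_snoc_neg_one_pow_eq_psiDet {f g : ℕ → R} (hg : ∀ r, g r = f r + f (r + 1))
    (k s : ℕ) :
    (of (Fin.snoc (fun (i : Fin k) (j : Fin (k + 1)) => f (2 * i + j))
      fun j => (-1 : R) ^ (j + s : ℕ))).det = (-1) ^ (k + s) * psiDet k g := by
  rw [det_snoc_neg_one_pow, psiDet]
  congr 2
  ext i j
  simp only [Fin.val_castSucc, Fin.val_succ, of_apply, hg, add_right_inj]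
  ring_nf

theorem det_snoc_first_row_eq_psiDet (f : ℕ → R) (k : ℕ) :
    (of (Fin.snoc (fun (i : Fin k) (j : Fin (k + 1)) => f (2 * i + j + 2)) fun j => f j)).det =
      (-1) ^ k * psiDet (k + 1) f := by
  rw [psiDet, ← det_snoc_tail_zero]
  congr 2
  ext i j
  cases i using Fin.lastCases
  · simp
  · simp only [Fin.snoc_castSucc, Fin.coe_ofNat_eq_mod, Nat.zero_mod, mul_zero, zero_add, Fin.tail,
      Fin.val_succ]
    ring_nf

theorem det_snoc_last_row_eq_psiDet (f : ℕ → R) (k : ℕ) :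
    (of (Fin.snoc (fun (i : Fin k) (j : Fin (k + 1)) => f (2 * i + j))
      fun j => f (2 * k + j))).det = psiDet (k + 1) f := by
  rw [psiDet]
  congr 1
  ext i j
  cases i using Fin.lastCases <;> simp

theorem psiDet_relation (f g : ℕ → R) (hg : ∀ r, g r = f r + f (r + 1)) (p : ℕ) :
    psiDet (p + 1) g * psiDet (p + 1) (fun r => f (r + 3))
      - psiDet (p + 2) f * psiDet p (fun r => g (r + 3))
      = psiDet (p + 1) (fun r => g (r + 2)) * psiDet (p + 1) (fun r => f (r + 1)) := by
  let u : Fin (p + 2) → Fin (p + 2) → R := fun i j => f (2 * i + j)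
  let A : Fin p → Fin (p + 1) → R := fun i j => f (2 * i + j + 3)
  -- `A` holds the interior rows of `u` without their first entry, so `φ` kills those rows.
  let φ := (detSnocLinear A).comp (LinearMap.funLeft R R Fin.succ)
  have hφ : ∀ v, φ v = (of (Fin.snoc A fun j => v j.succ)).det :=
    fun v => detSnocLinear_apply A _
  have hinterior : ∀ i : Fin p, φ (u i.succ.castSucc) = 0 := by
    intro i
    rw [hφ]
    refine det_zero_of_row_eq (Fin.castSucc_lt_last i).ne (funext fun j => ?_)
    simp only [Fin.castSucc_succ, Fin.val_succ, Fin.val_castSucc, of_apply, Fin.snoc_castSucc,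
      Fin.snoc_last, A, u]
    ring_nf
  have hG2 : (of (Fin.snoc (Fin.tail u) fun j : Fin (p + 2) => (-1 : R) ^ (j : ℕ))).det =
      (-1) ^ (p + 1) * psiDet (p + 1) (fun r => g (r + 2)) := by
    rw [show Fin.tail u = fun (i : Fin (p + 1)) (j : Fin (p + 2)) => f (2 * i + j + 2) by
      ext i j; simp only [Fin.tail, Fin.val_succ, u]; ring_nf]
    exact det_snoc_neg_one_pow_eq_psiDet (fun r => hg (r + 2)) (p + 1) 0
  have hG0 : (of (Fin.snoc (Fin.init u) fun j : Fin (p + 2) => (-1 : R) ^ (j : ℕ))).det =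
      (-1) ^ (p + 1) * psiDet (p + 1) g :=
    det_snoc_neg_one_pow_eq_psiDet hg (p + 1) 0
  have hG3 : φ (fun j => (-1) ^ (j : ℕ)) = (-1) ^ (p + 1) * psiDet p (fun r => g (r + 3)) := by
    simpa [hφ] using det_snoc_neg_one_pow_eq_psiDet (fun r => hg (r + 3)) p 1
  have hF1 : φ (u 0) = (-1) ^ p * psiDet (p + 1) (fun r => f (r + 1)) := by
    rw [hφ, show (fun j => u 0 j.succ) = fun j : Fin (p + 1) => f (j + 1) by ext j; simp [u]]
    exact det_snoc_first_row_eq_psiDet (fun r => f (r + 1)) p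
  have hF3 : φ (u (Fin.last _)) = psiDet (p + 1) (fun r => f (r + 3)) := by
    rw [hφ, show (fun j => u (Fin.last _) j.succ) = fun j : Fin (p + 1) => f (2 * p + j + 3) by
      ext j; simp only [Fin.val_last, Fin.val_succ, u]; ring_nf]
    exact det_snoc_last_row_eq_psiDet (fun r => f (r + 3)) p
  have h := three_term_relation u (fun j => (-1) ^ (j : ℕ)) φ hinterior
  rw [hG2, hG0, hG3, hF1, hF3, show (of u).det = psiDet (p + 2) f from rfl] at h
  have hsq : ((-1 : R) ^ p) ^ 2 = 1 := by rw [← pow_mul, mul_comm, pow_mul]; norm_num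
  linear_combination h - (psiDet (p + 1) g * psiDet (p + 1) (fun r => f (r + 3))
      - psiDet (p + 2) f * psiDet p (fun r => g (r + 3))
      - psiDet (p + 1) (fun r => g (r + 2)) * psiDet (p + 1) (fun r => f (r + 1))) * hsq

end Determinants

theorem iterate_Δ_apply_add_one (v : ℕ → ℝ) (a n : ℕ) :
    (Δ^[a] v) (n + 1) = (Δ^[a] v) n + (Δ^[a + 1] v) n := by
  rw [Function.iterate_succ_apply']
  simp [Δ]

theorem Psi_eq_psiDet (k : ℕ) (v : ℕ → ℝ) (n : ℕ) :
    Psi k v n = psiDet k (fun r => (Δ^[r] v) n) := by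
  rw [Psi, det_shift_eq_det_fwdDiff_iter, psiDet]
  congr 2
  ext i j
  rw [add_comm, Function.iterate_add_apply]
  rfl

theorem stmt5 (S : ℕ → ℝ) (m : ℕ) (hm : 1 ≤ m) (n : ℕ) :
    Psi m (Δ S) (n + 1) * Psi m (Δ^[4] S) n
      - Psi (m + 1) (Δ S) n * Psi (m - 1) (Δ^[4] S) (n + 1)
      = Psi m (Δ^[3] S) (n + 1) * Psi m (Δ^[2] S) n := by
  obtain ⟨p, rfl⟩ : ∃ p, m = p + 1 := ⟨m - 1, by omega⟩
  simp only [Psi_eq_psiDet]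
  exact psiDet_relation (fun r => (Δ^[r + 1] S) n) (fun r => (Δ^[r + 1] S) (n + 1))
    (fun r => iterate_Δ_apply_add_one S (r + 1) n) p
end

section
/- For every integer m ≥ 1 and every n ∈ ℕ, the determinantal identity Ψ_{m−1}(Δ³S)_n · Ψ_m(Δ²S)_{n+1} − Ψ_{m−1}(Δ³S)_{n+1} · Ψ_m(Δ²S)_n = Ψ_m(Δ³S)_n · Ψ_{m−1}(Δ²S)_{n+1} holds. (This is the bilinear relation F_k^n F_{k+2}^{n+1} − F_k^{n+1} F_{k+2}^n = F_{k+3}^n F_{k−1}^{n+1} of the lattice Boussinesq molecule solution in the case k = 3m, proved in the paper as a Jacobi determinant identity.) -/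
/-!
Let `B` be the `(m+1) × (m+1)` matrix `(Δ^{2i} v)_{n+j}` with `v = Δ²S`. Replacing its last two
rows by two of the vectors `B_{m-1}` (its own row), `1 = (1,…,1)`, `e₀` and `e_m`, and expanding
along the replaced rows, yields each of the six determinants of the identity up to sign: a unit
row deletes a column, and a row of ones, after taking consecutive column differences, turns
`v` into `Δv`. The identity is then the three-term Plücker relation among these four vectors.
-/

open Matrix

namespace Matrix

section Pluecker

variable {R ι : Type*} [CommRing R] [Fintype ι] [DecidableEq ι]

def detUpdateRowLinearMap (M : Matrix ι ι R) (j : ι) : (ι → R) →ₗ[R] R where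
  toFun b := (M.updateRow j b).det
  map_add' := det_updateRow_add M j
  map_smul' := det_updateRow_smul M j

def detUpdateRows (A : Matrix ι ι R) (i j : ι) (a b : ι → R) : R :=
  ((A.updateRow i a).updateRow j b).det

variable (A : Matrix ι ι R) {i j : ι}

theorem detUpdateRows_comm (h : i ≠ j) (a b : ι → R) :
    detUpdateRows A i j a b = detUpdateRows A j i b a := by
  rw [detUpdateRows, detUpdateRows, updateRow_comm _ h]

theorem detUpdateRows_self (h : i ≠ j) (a : ι → R) : detUpdateRows A i j a a = 0 :=
  det_zero_of_row_eq h (by simp [updateRow_ne h])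

theorem detUpdateRows_add_left (h : i ≠ j) (a b c : ι → R) :
    detUpdateRows A i j (a + b) c = detUpdateRows A i j a c + detUpdateRows A i j b c := by
  simp only [detUpdateRows_comm A h _ c]
  exact det_updateRow_add _ _ _ _

theorem detUpdateRows_add_right (a b c : ι → R) :
    detUpdateRows A i j a (b + c) = detUpdateRows A i j a b + detUpdateRows A i j a c :=
  det_updateRow_add _ _ _ _

theorem detUpdateRows_swap (h : i ≠ j) (a b : ι → R) :
    detUpdateRows A i j a b = -detUpdateRows A i j b a := by
  have hsum := detUpdateRows_self A h (a + b)
  rw [detUpdateRows_add_left A h, detUpdateRows_add_right, detUpdateRows_add_right,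
    detUpdateRows_self A h, detUpdateRows_self A h] at hsum
  linear_combination hsum

theorem detUpdateRows_row_left (h : i ≠ j) {k : ι} (hi : k ≠ i) (hj : k ≠ j) (b : ι → R) :
    detUpdateRows A i j (A k) b = 0 :=
  det_zero_of_row_eq hi.symm (by simp [updateRow_ne hj, updateRow_ne hi, updateRow_ne h])

end Pluecker

section Field

variable {K ι : Type*} [Field K] [Fintype ι] [DecidableEq ι]

theorem det_eq_zero_of_forall_row_mem {M : Matrix ι ι K} {p : Submodule K (ι → K)}
    (hp : p ≠ ⊤) (h : ∀ i, M i ∈ p) : M.det = 0 := by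
  refine det_eq_zero_of_not_linearIndependent_rows fun hli => ?_
  have hcard : Fintype.card ι ≤ Module.finrank K p :=
    (LinearIndependent.of_comp p.subtype (v := fun i => (⟨M i, h i⟩ : p)) hli).fintype_card_le_finrank
  have hlt := Submodule.finrank_lt hp
  rw [Module.finrank_fintype_fun_eq_card] at hlt
  omega

theorem detUpdateRows_eq_zero_of_mem {A : Matrix ι ι K} {i j : ι} {p : Submodule K (ι → K)}
    (hp : p ≠ ⊤) (hA : ∀ k, k ≠ i → k ≠ j → A k ∈ p) {a b : ι → K} (ha : a ∈ p) (hb : b ∈ p) :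
    detUpdateRows A i j a b = 0 := by
  refine det_eq_zero_of_forall_row_mem hp fun k => ?_
  by_cases hkj : k = j
  · subst hkj
    simpa using hb
  by_cases hki : k = i
  · subst hki
    simpa [updateRow_ne hkj] using ha
  simpa [updateRow_ne hkj, updateRow_ne hki] using hA k hki hkj

theorem detUpdateRows_pluecker (A : Matrix ι ι K) {i j : ι} (h : i ≠ j) (w x y z : ι → K) :
    detUpdateRows A i j y z * detUpdateRows A i j w x
      - detUpdateRows A i j x z * detUpdateRows A i j w y
      + detUpdateRows A i j x y * detUpdateRows A i j w z = 0 := by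
  set D := detUpdateRows A i j
  set s : Set (ι → K) := Set.range (fun k : {k // k ≠ i ∧ k ≠ j} => A k) ∪ {x, y, z}
  -- If `s` spans, the left side is linear in `w` and vanishes on `s`; otherwise `s` lies in a
  -- proper subspace and the three coefficients vanish.
  by_cases hs : Submodule.span K s = ⊤
  · let φ : (ι → K) →ₗ[K] K := D y z • detUpdateRowLinearMap (A.updateRow i x) j
      - D x z • detUpdateRowLinearMap (A.updateRow i y) j
      + D x y • detUpdateRowLinearMap (A.updateRow i z) j
    have hφ_apply : ∀ u, φ u = D y z * D x u - D x z * D y u + D x y * D z u := fun u => rfl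
    have hφ : φ = 0 := by
      refine LinearMap.ext_on hs fun u hu => ?_
      rw [hφ_apply, LinearMap.zero_apply]
      rw [Set.mem_union, Set.mem_insert_iff, Set.mem_insert_iff, Set.mem_singleton_iff] at hu
      rcases hu with ⟨⟨k, hki, hkj⟩, rfl⟩ | hu | hu | hu
      · simp only [D, detUpdateRows_swap A h _ (A k), detUpdateRows_row_left A h hki hkj]
        ring
      · rw [hu]
        simp only [D, detUpdateRows_self A h, detUpdateRows_swap A h y x,
          detUpdateRows_swap A h z x]
        ring
      · rw [hu]
        simp only [D, detUpdateRows_self A h, detUpdateRows_swap A h z y]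
        ring
      · rw [hu]
        simp only [D, detUpdateRows_self A h]
        ring
    have hφw := LinearMap.congr_fun hφ w
    rw [hφ_apply, LinearMap.zero_apply] at hφw
    simp only [D, detUpdateRows_swap A h w]
    linear_combination -hφw
  · have hD : ∀ a ∈ s, ∀ b ∈ s, D a b = 0 := fun a ha b hb =>
      detUpdateRows_eq_zero_of_mem hs
        (fun k hki hkj => Submodule.subset_span (Or.inl ⟨⟨k, hki, hkj⟩, rfl⟩))
        (Submodule.subset_span ha) (Submodule.subset_span hb)
    have hx : x ∈ s := by simp [s]
    have hy : y ∈ s := by simp [s]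
    have hz : z ∈ s := by simp [s]
    simp [hD y hy z hz, hD x hx z hz, hD x hx y hy]

end Field

theorem submatrix_updateRow_of_injective {l m n o α : Type*} [DecidableEq l] [DecidableEq m]
    (A : Matrix m n α) {e : l → m} (he : Function.Injective e) (i : l) (r : n → α) (f : o → n) :
    (A.updateRow (e i) r).submatrix e f = (A.submatrix e f).updateRow i (r ∘ f) := by
  ext a b
  by_cases ha : a = i
  · subst ha
    simp
  · simp [updateRow_ne ha, updateRow_ne (he.ne ha)]

section Fin

variable {R : Type*} [CommRing R] {q : ℕ}

theorem det_updateRow_last_single (M : Matrix (Fin (q + 1)) (Fin (q + 1)) R) (c : Fin (q + 1)) :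
    (M.updateRow (Fin.last q) (Pi.single c 1)).det
      = (-1) ^ (q + c.val) * (M.submatrix Fin.castSucc c.succAbove).det := by
  rw [det_succ_row _ (Fin.last q), Finset.sum_eq_single c]
  · simp [← Fin.succAbove_last]
  · intro b _ hb
    simp [Pi.single_eq_of_ne hb]
  · simp

theorem det_updateRow_last_one (M : Matrix (Fin (q + 1)) (Fin (q + 1)) R) :
    (M.updateRow (Fin.last q) 1).det
      = (-1) ^ q * (of fun i j : Fin q => M i.castSucc j.succ - M i.castSucc j.castSucc).det := by
  let B : Matrix (Fin (q + 1)) (Fin (q + 1)) R :=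
    of fun i j => Fin.cases (M i 0) (fun j' : Fin q => M i j'.succ - M i j'.castSucc) j
  have hB : (M.updateRow (Fin.last q) 1).det = (B.updateRow (Fin.last q) (Pi.single 0 1)).det := by
    refine det_eq_of_forall_col_eq_smul_add_pred (fun _ => 1) (fun i => ?_) (fun i j => ?_)
    all_goals
      by_cases hi : i = Fin.last q
      · subst hi
        simp [B]
      · simp [B, updateRow_ne hi]
  rw [hB, det_updateRow_last_single]
  rfl

end Fin

end Matrix

theorem iterate_Δ_apply_succ_sub (k : ℕ) (v : ℕ → ℝ) (p : ℕ) :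
    Δ^[k] v (p + 1) - Δ^[k] v p = Δ^[k] (Δ v) p := by
  rw [← Function.iterate_succ_apply, Function.iterate_succ_apply']
  rfl

def psiMatrix (k : ℕ) (v : ℕ → ℝ) (n : ℕ) : Matrix (Fin k) (Fin k) ℝ :=
  of fun i j => (Δ^[2 * i.val] v) (n + j.val)

section psiMatrix

variable (k : ℕ) (v : ℕ → ℝ) (n : ℕ)

theorem psiMatrix_submatrix_castSucc_castSucc :
    (psiMatrix (k + 1) v n).submatrix Fin.castSucc Fin.castSucc = psiMatrix k v n :=
  rfl

theorem psiMatrix_submatrix_castSucc_succ :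
    (psiMatrix (k + 1) v n).submatrix Fin.castSucc Fin.succ = psiMatrix k v (n + 1) := by
  ext i j
  simp [psiMatrix, Nat.add_assoc, Nat.add_comm 1]

theorem psiMatrix_colDiff :
    (of fun i j : Fin k =>
        psiMatrix (k + 1) v n i.castSucc j.succ - psiMatrix (k + 1) v n i.castSucc j.castSucc)
      = psiMatrix k (Δ v) n := by
  ext i j
  simp [psiMatrix, ← Nat.add_assoc, iterate_Δ_apply_succ_sub]

end psiMatrix

theorem Pi.single_zero_comp_castSucc {M : Type*} [Zero M] (q : ℕ) (x : M) :
    (Pi.single (0 : Fin (q + 2)) x) ∘ Fin.castSucc = Pi.single 0 x := by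
  funext j
  simp [Pi.single_apply]

abbrev psiDetUpdateLastRows (q : ℕ) (v : ℕ → ℝ) (n : ℕ) (a b : Fin (q + 2) → ℝ) : ℝ :=
  detUpdateRows (psiMatrix (q + 2) v n) (Fin.last q).castSucc (Fin.last (q + 1)) a b

section psiDetUpdateLastRows

variable (q : ℕ) (v : ℕ → ℝ) (n : ℕ)

theorem psiDetUpdateLastRows_row (b : Fin (q + 2) → ℝ) :
    psiDetUpdateLastRows q v n (psiMatrix (q + 2) v n (Fin.last q).castSucc) b
      = ((psiMatrix (q + 2) v n).updateRow (Fin.last (q + 1)) b).det := by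
  rw [psiDetUpdateLastRows, detUpdateRows, updateRow_eq_self]

theorem psiDetUpdateLastRows_row_single_last :
    psiDetUpdateLastRows q v n (psiMatrix (q + 2) v n (Fin.last q).castSucc)
      (Pi.single (Fin.last (q + 1)) 1) = Psi (q + 1) v n := by
  rw [psiDetUpdateLastRows_row, det_updateRow_last_single, Fin.succAbove_last,
    psiMatrix_submatrix_castSucc_castSucc, Fin.val_last, Even.neg_one_pow ⟨q + 1, rfl⟩, one_mul]
  rfl

theorem psiDetUpdateLastRows_row_single_zero :
    psiDetUpdateLastRows q v n (psiMatrix (q + 2) v n (Fin.last q).castSucc) (Pi.single 0 1)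
      = (-1) ^ (q + 1) * Psi (q + 1) v (n + 1) := by
  rw [psiDetUpdateLastRows_row, det_updateRow_last_single, Fin.succAbove_zero,
    psiMatrix_submatrix_castSucc_succ]
  rfl

theorem psiDetUpdateLastRows_row_one :
    psiDetUpdateLastRows q v n (psiMatrix (q + 2) v n (Fin.last q).castSucc) 1
      = (-1) ^ (q + 1) * Psi (q + 1) (Δ v) n := by
  rw [psiDetUpdateLastRows_row, det_updateRow_last_one, psiMatrix_colDiff]
  rfl

theorem psiDetUpdateLastRows_single_zero_single_last :
    psiDetUpdateLastRows q v n (Pi.single 0 1) (Pi.single (Fin.last (q + 1)) 1)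
      = (-1) ^ q * Psi q v (n + 1) := by
  rw [psiDetUpdateLastRows, detUpdateRows, det_updateRow_last_single, Fin.succAbove_last,
    submatrix_updateRow_of_injective _ (Fin.castSucc_injective _),
    psiMatrix_submatrix_castSucc_castSucc, Pi.single_zero_comp_castSucc,
    det_updateRow_last_single, Fin.succAbove_zero, psiMatrix_submatrix_castSucc_succ,
    Fin.val_last, Even.neg_one_pow ⟨q + 1, rfl⟩, one_mul]
  rfl

theorem psiDetUpdateLastRows_one_single_last :
    psiDetUpdateLastRows q v n 1 (Pi.single (Fin.last (q + 1)) 1) = (-1) ^ q * Psi q (Δ v) n := by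
  rw [psiDetUpdateLastRows, detUpdateRows, det_updateRow_last_single, Fin.succAbove_last,
    submatrix_updateRow_of_injective _ (Fin.castSucc_injective _),
    psiMatrix_submatrix_castSucc_castSucc, Pi.one_comp, det_updateRow_last_one,
    psiMatrix_colDiff, Fin.val_last, Even.neg_one_pow ⟨q + 1, rfl⟩, one_mul]
  rfl

theorem psiDetUpdateLastRows_one_single_zero :
    psiDetUpdateLastRows q v n 1 (Pi.single 0 1) = -Psi q (Δ v) (n + 1) := by
  rw [psiDetUpdateLastRows, detUpdateRows, det_updateRow_last_single, Fin.succAbove_zero,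
    submatrix_updateRow_of_injective _ (Fin.castSucc_injective _),
    psiMatrix_submatrix_castSucc_succ, Pi.one_comp, det_updateRow_last_one, psiMatrix_colDiff,
    Fin.val_zero, add_zero, ← mul_assoc, ← pow_add, Odd.neg_one_pow ⟨q, by ring⟩, neg_one_mul]
  rfl

end psiDetUpdateLastRows

theorem Psi_Δ_mul_Psi_succ_sub (q n : ℕ) (v : ℕ → ℝ) :
    Psi q (Δ v) n * Psi (q + 1) v (n + 1) - Psi q (Δ v) (n + 1) * Psi (q + 1) v n
      = Psi (q + 1) (Δ v) n * Psi q v (n + 1) := by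
  have hne : (Fin.last q).castSucc ≠ Fin.last (q + 1) := (Fin.castSucc_lt_last _).ne
  have hP := detUpdateRows_pluecker (psiMatrix (q + 2) v n) hne
    (psiMatrix (q + 2) v n (Fin.last q).castSucc) 1 (Pi.single 0 1) (Pi.single (Fin.last (q + 1)) 1)
  simp only [psiDetUpdateLastRows_row_single_last, psiDetUpdateLastRows_row_single_zero,
    psiDetUpdateLastRows_row_one, psiDetUpdateLastRows_single_zero_single_last,
    psiDetUpdateLastRows_one_single_last, psiDetUpdateLastRows_one_single_zero] at hP
  have hε : ((-1 : ℝ) ^ q) ^ 2 = 1 := by rw [← pow_mul, Even.neg_one_pow ⟨q, by ring⟩]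
  linear_combination hP
    + (Psi (q + 1) (Δ v) n * Psi q v (n + 1) - Psi q (Δ v) n * Psi (q + 1) v (n + 1)) * hε

theorem stmt6 (S : ℕ → ℝ) (m : ℕ) (hm : 1 ≤ m) (n : ℕ) :
    Psi (m - 1) (Δ^[3] S) n * Psi m (Δ^[2] S) (n + 1)
      - Psi (m - 1) (Δ^[3] S) (n + 1) * Psi m (Δ^[2] S) n
      = Psi m (Δ^[3] S) n * Psi (m - 1) (Δ^[2] S) (n + 1) := by
  obtain ⟨q, rfl⟩ : ∃ q, m = q + 1 := ⟨m - 1, by omega⟩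
  rw [Nat.add_sub_cancel, Function.iterate_succ_apply' Δ 2 S]
  exact Psi_Δ_mul_Psi_succ_sub q n (Δ^[2] S)
end

section
/- For every integer m ≥ 1 and every n ∈ ℕ, the determinantal identity Ψ_m(Δ²S)_n · Ψ_{m+1}(ΔS)_{n+1} − Ψ_m(Δ²S)_{n+1} · Ψ_{m+1}(ΔS)_n = Ψ_{m+1}(Δ²S)_n · Ψ_m(ΔS)_{n+1} holds. (This is the bilinear relation F_k^n F_{k+2}^{n+1} − F_k^{n+1} F_{k+2}^n = F_{k+3}^n F_{k−1}^{n+1} of the lattice Boussinesq molecule solution in the case k = 3m+2.) -/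
/-!
Put `w = ΔS` and let `c p, d p ∈ ℝ^(m+1)` be the columns `((Δ^[2i] w) p)ᵢ` and
`((Δ^[2i] (Δ w)) p)ᵢ`, so that `d p = c (p+1) - c p`. Subtracting consecutive columns writes
`Ψ_{m+1}(w)` through the columns `c p, d p, d (p+1), …`, and bordering by the last unit vector `e`
writes the size-`m` determinants as determinants of size `m+1`. All six determinants of the
identity then contain the `m-1` columns `d (n+1), …, d (n+m-1)`, and the identity becomes the
three-term Plücker relation between `e, c n, d n, d (n+m)`.
-/

open Matrix

namespace AlternatingMap

section CommRing

variable {R M : Type*} [CommRing R] [AddCommGroup M] [Module R M]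

theorem map_snoc {N : Type*} [AddCommGroup N] [Module R N] {n : ℕ}
    (f : M [⋀^Fin (n + 1)]→ₗ[R] N) (v : Fin n → M) (x : M) :
    f (Fin.snoc v x) = (-1 : R) ^ n • f (vecCons x v) := by
  rw [← Fin.insertNth_last', ← Fin.cons_comp_cycleRange, f.map_perm, Fin.sign_cycleRange,
    Units.smul_def, ← Int.cast_smul_eq_zsmul R]
  push_cast
  rfl

variable {r : ℕ}

def pairing (f : M [⋀^Fin (r + 2)]→ₗ[R] R) (B : Fin r → M) : M →ₗ[R] M →ₗ[R] R :=
  LinearMap.mk₂ R (fun x y => f (vecCons x (vecCons y B)))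
    (fun x₁ x₂ _ => f.map_vecCons_add _ x₁ x₂) (fun a x _ => f.map_vecCons_smul _ a x)
    (fun x y₁ y₂ => (f.curryLeft x).map_vecCons_add B y₁ y₂)
    (fun a x y => (f.curryLeft x).map_vecCons_smul B a y)

variable (f : M [⋀^Fin (r + 2)]→ₗ[R] R) (B : Fin r → M)

theorem pairing_isAlt : (f.pairing B).IsAlt := fun _ =>
  f.map_eq_zero_of_eq _ (i := 0) (j := 1) rfl Fin.zero_ne_one

theorem pairing_apply_left_eq_zero (i : Fin r) (y : M) : f.pairing B (B i) y = 0 :=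
  f.map_eq_zero_of_eq _ (i := 0) (j := i.succ.succ) rfl (Fin.succ_ne_zero _).symm

theorem map_vecCons_snoc (x y : M) :
    f (vecCons x (Fin.snoc B y)) = (-1) ^ r * f.pairing B x y :=
  (f.curryLeft x).map_snoc B y

end CommRing

section Field

variable {K V : Type*} [Field K] [AddCommGroup V] [Module K V] {r : ℕ}
variable (f : V [⋀^Fin (r + 2)]→ₗ[K] K) (B : Fin r → V)

theorem pairing_eq_zero_of_mem {W : Submodule K V} (hW : W ≠ ⊤)
    (hV : Module.finrank K V = r + 2) (hB : ∀ i, B i ∈ W) {x y : V} (hx : x ∈ W) (hy : y ∈ W) :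
    f.pairing B x y = 0 := by
  refine f.map_linearDependent _ fun hli => hW (eq_top_iff.2 ?_)
  rw [← hli.span_eq_top_of_card_eq_finrank (by simp [hV]), Submodule.span_le]
  rintro _ ⟨i, rfl⟩
  cases i using Fin.cases with
  | zero => exact hx
  | succ i => cases i using Fin.cases with
    | zero => exact hy
    | succ i => exact hB i

theorem pairing_pluecker (hV : Module.finrank K V = r + 2) (x₁ x₂ x₃ x₄ : V) :
    f.pairing B x₁ x₂ * f.pairing B x₃ x₄ - f.pairing B x₁ x₃ * f.pairing B x₂ x₄
      + f.pairing B x₁ x₄ * f.pairing B x₂ x₃ = 0 := by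
  -- If `x₂, x₃, x₄` and `B` span `V`, the left side is a linear form in `x₁` vanishing on a
  -- spanning set; otherwise `f.pairing B` vanishes on all pairs among `x₂, x₃, x₄`.
  set s : Set V := {x₂, x₃, x₄} ∪ Set.range B
  by_cases hs : Submodule.span K s = ⊤
  · let L : V →ₗ[K] K := f.pairing B x₃ x₄ • (f.pairing B).flip x₂
      - f.pairing B x₂ x₄ • (f.pairing B).flip x₃ + f.pairing B x₂ x₃ • (f.pairing B).flip x₄
    have hL (z : V) : L z = f.pairing B z x₂ * f.pairing B x₃ x₄
        - f.pairing B z x₃ * f.pairing B x₂ x₄ + f.pairing B z x₄ * f.pairing B x₂ x₃ := by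
      simp only [L, LinearMap.add_apply, LinearMap.sub_apply, LinearMap.smul_apply,
        LinearMap.flip_apply, smul_eq_mul]
      ring
    have hLs : s ⊆ LinearMap.ker L := by
      have hself := (f.pairing_isAlt B).self_eq_zero
      have hswap := (f.pairing_isAlt B).neg
      rintro z ((hz | hz | hz) | ⟨i, rfl⟩) <;> rw [SetLike.mem_coe, LinearMap.mem_ker, hL]
      · subst z
        rw [hself]
        ring
      · subst z
        rw [hself, ← hswap x₂ x₃]
        ring
      · subst z
        rw [hself, ← hswap x₂ x₄, ← hswap x₃ x₄]
        ring
      · simp only [pairing_apply_left_eq_zero, zero_mul, sub_self, add_zero]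
    simpa only [LinearMap.mem_ker, hL] using
      Submodule.span_le.2 hLs (hs ▸ Submodule.mem_top : x₁ ∈ _)
  · have h {x y : V} (hx : x ∈ s) (hy : y ∈ s) : f.pairing B x y = 0 :=
      f.pairing_eq_zero_of_mem B hs hV (fun i => Submodule.subset_span (Or.inr ⟨i, rfl⟩))
        (Submodule.subset_span hx) (Submodule.subset_span hy)
    simp [s, h (x := x₃) (y := x₄), h (x := x₂) (y := x₄), h (x := x₂) (y := x₃)]

end Field

end AlternatingMap

theorem Matrix.det_vecCons_single_last {R : Type*} [CommRing R] {k : ℕ}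
    (b : Fin k → Fin (k + 1) → R) :
    det (of (vecCons (Pi.single (Fin.last k) 1) b))
      = (-1) ^ k * det (of fun j => b j ∘ Fin.castSucc) := by
  rw [det_succ_row_zero, Finset.sum_eq_single (Fin.last k)]
  · simp [Fin.succAbove_last]
    rfl
  · intro j _ hj
    simp [hj]
  · simp

section Window

variable {α : Type*} (g : ℕ → α) (p k : ℕ)

def window : Fin k → α := fun j => g (p + j)

theorem window_succ : window g p (k + 1) = vecCons (g p) (window g (p + 1) k) := by
  ext j
  cases j using Fin.cases with
  | zero => rfl
  | succ j => simp [window, add_assoc, add_comm 1]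

theorem window_succ' : window g p (k + 1) = Fin.snoc (window g p k) (g (p + k)) := by
  ext j
  cases j using Fin.lastCases with
  | last => simp [window]
  | cast j => simp [window]

end Window

theorem Matrix.det_of_window_succ {R : Type*} [CommRing R] {k : ℕ} (g : ℕ → Fin (k + 1) → R) (p : ℕ) :
    det (of (window g p (k + 1)))
      = det (of (vecCons (g p) (window (fun q => g (q + 1) - g q) p k))) := by
  refine det_eq_of_forall_row_eq_smul_add_pred (fun _ => 1) (fun _ => rfl) fun _ _ => ?_
  simp [window, add_assoc]

def psiColumn (k : ℕ) (v : ℕ → ℝ) (p : ℕ) : Fin k → ℝ := fun i => (Δ^[2 * i.val] v) p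

theorem psiColumn_delta (k : ℕ) (v : ℕ → ℝ) :
    psiColumn k (Δ v) = fun p => psiColumn k v (p + 1) - psiColumn k v p := by
  ext p i
  rw [psiColumn, ← Function.iterate_succ_apply, Function.iterate_succ_apply']
  rfl

theorem Psi_eq_det_window (k : ℕ) (v : ℕ → ℝ) (p : ℕ) :
    Psi k v p = det (of (window (psiColumn k v) p k)) := by
  rw [← det_transpose]
  rfl

theorem Psi_succ (k : ℕ) (v : ℕ → ℝ) (p : ℕ) :
    Psi (k + 1) v p
      = det (of (vecCons (psiColumn (k + 1) v p) (window (psiColumn (k + 1) (Δ v)) p k))) := by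
  rw [Psi_eq_det_window, det_of_window_succ, psiColumn_delta]

theorem Psi_eq_bordered (k : ℕ) (v : ℕ → ℝ) (p : ℕ) :
    Psi k v p = (-1) ^ k
      * det (of (vecCons (Pi.single (Fin.last k) 1) (window (psiColumn (k + 1) v) p k))) := by
  rw [det_vecCons_single_last, ← mul_assoc, pow_mul_pow_eq_one k (by norm_num), one_mul,
    Psi_eq_det_window]
  rfl

theorem Psi_succ_eq_bordered (k : ℕ) (v : ℕ → ℝ) (p : ℕ) :
    Psi (k + 1) v p = (-1) ^ (k + 1) * det (of (vecCons (Pi.single (Fin.last (k + 1)) 1)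
      (vecCons (psiColumn (k + 2) v p) (window (psiColumn (k + 2) (Δ v)) p k)))) := by
  rw [det_vecCons_single_last, ← mul_assoc, pow_mul_pow_eq_one (k + 1) (by norm_num), one_mul,
    Psi_succ]
  congr 2
  ext j
  cases j using Fin.cases <;> rfl

theorem Psi_bilinear_succ (w : ℕ → ℝ) (r n : ℕ) :
    Psi (r + 1) (Δ w) n * Psi (r + 2) w (n + 1) - Psi (r + 1) (Δ w) (n + 1) * Psi (r + 2) w n
      = Psi (r + 2) (Δ w) n * Psi (r + 1) w (n + 1) := by
  set c := psiColumn (r + 2) w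
  set d := psiColumn (r + 2) (Δ w)
  set e : Fin (r + 2) → ℝ := Pi.single (Fin.last (r + 1)) 1
  set y := d (n + 1 + r)
  set D : (Fin (r + 2) → ℝ) [⋀^Fin (r + 2)]→ₗ[ℝ] ℝ := detRowAlternating
  set ω := D.pairing (window d (n + 1) r)
  have hc : c (n + 1) = c n + d n := by
    simp only [c, d, psiColumn_delta, add_sub_cancel]
  have h₁ : Psi (r + 1) (Δ w) n = (-1) ^ (r + 1) * ω e (d n) := by
    rw [Psi_eq_bordered, window_succ]
    rfl
  have h₂ : Psi (r + 2) w (n + 1) = (-1) ^ r * ω (c (n + 1)) y := by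
    rw [Psi_succ, window_succ']
    exact D.map_vecCons_snoc _ _ _
  have h₃ : Psi (r + 1) (Δ w) (n + 1) = (-1) ^ (r + 1) * ((-1) ^ r * ω e y) := by
    rw [Psi_eq_bordered, window_succ']
    exact congrArg _ (D.map_vecCons_snoc _ _ _)
  have h₄ : Psi (r + 2) w n = ω (c n) (d n) := by
    rw [Psi_succ, window_succ]
    rfl
  have h₅ : Psi (r + 2) (Δ w) n = (-1) ^ r * ω (d n) y := by
    rw [Psi_eq_det_window, window_succ, window_succ']
    exact D.map_vecCons_snoc _ _ _
  have h₆ : Psi (r + 1) w (n + 1) = (-1) ^ (r + 1) * ω e (c (n + 1)) := by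
    rw [Psi_succ_eq_bordered]
    rfl
  have hP := D.pairing_pluecker (window d (n + 1) r) (by simp) e (c n) (d n) y
  rw [h₁, h₂, h₃, h₄, h₅, h₆, hc, map_add, LinearMap.add_apply, map_add]
  linear_combination (-(-1) ^ (r + 1) * (-1) ^ r : ℝ) * hP

theorem Psi_bilinear (w : ℕ → ℝ) (m n : ℕ) :
    Psi m (Δ w) n * Psi (m + 1) w (n + 1) - Psi m (Δ w) (n + 1) * Psi (m + 1) w n
      = Psi (m + 1) (Δ w) n * Psi m w (n + 1) := by
  cases m with
  | zero => simp [Psi, Δ]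
  | succ r => exact Psi_bilinear_succ w r n

theorem stmt8_general (S : ℕ → ℝ) (m : ℕ) (n : ℕ) :
    Psi m (Δ^[2] S) n * Psi (m + 1) (Δ S) (n + 1)
      - Psi m (Δ^[2] S) (n + 1) * Psi (m + 1) (Δ S) n
      = Psi (m + 1) (Δ^[2] S) n * Psi m (Δ S) (n + 1) :=
  Psi_bilinear (Δ S) m n

theorem stmt8 (S : ℕ → ℝ) (m : ℕ) (hm : 1 ≤ m) (n : ℕ) :
    Psi m (Δ^[2] S) n * Psi (m + 1) (Δ S) (n + 1)
      - Psi m (Δ^[2] S) (n + 1) * Psi (m + 1) (Δ S) n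
      = Psi (m + 1) (Δ^[2] S) n * Psi m (Δ S) (n + 1) :=
  stmt8_general S m n
end

section
/- For every integer m ≥ 1 and every n ∈ ℕ, the determinant of the (m+1)×(m+1) matrix whose row 0 consists entirely of ones and whose (i,j) entry, for 1 ≤ i ≤ m and 0 ≤ j ≤ m, is (Δ^{2(i−1)} S)_{n+j} (i.e. rows S, Δ²S, …, Δ^{2m−2}S evaluated at columns n, n+1, …, n+m) equals Ψ_m(ΔS)_n. -/
/-!
Subtracting from each column its left neighbour leaves the determinant unchanged and turns the
row of ones into `(1, 0, …, 0)`; expanding along that row leaves the matrix of consecutive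
differences `(Δ^{2i} S)_{n+j+1} - (Δ^{2i} S)_{n+j} = (Δ^{2i} ΔS)_{n+j}`, which is `Ψ_m(ΔS)_n`.
-/

namespace Matrix

theorem det_eq_det_colDiff_of_row_zero_eq_one {R : Type*} [CommRing R] {m : ℕ}
    (A : Matrix (Fin (m + 1)) (Fin (m + 1)) R) (hA : ∀ j, A 0 j = 1) :
    A.det = (of fun i j : Fin m => A i.succ j.succ - A i.succ j.castSucc).det := by
  let B : Matrix (Fin (m + 1)) (Fin (m + 1)) R :=
    of fun i => Fin.cases (A i 0) fun j => A i j.succ - A i j.castSucc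
  have hAB : A.det = B.det :=
    det_eq_of_forall_col_eq_smul_add_pred (fun _ => 1) (fun _ => rfl) fun i j => by
      simp [B]
  have hB_zero_zero : B 0 0 = 1 := hA 0
  have hB_row_zero : ∀ j : Fin m, B 0 j.succ = 0 := fun j => by simp [B, hA]
  rw [hAB, det_succ_row_zero, Fin.sum_univ_succ]
  simp only [hB_zero_zero, hB_row_zero, Fin.val_zero, pow_zero, one_mul, mul_zero, zero_mul,
    Finset.sum_const_zero, add_zero, Fin.succAbove_zero]
  rfl

end Matrix

theorem iterate_Δ_Δ_apply (k : ℕ) (v : ℕ → ℝ) (n : ℕ) :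
    (Δ^[k] (Δ v)) n = (Δ^[k] v) (n + 1) - (Δ^[k] v) n := by
  rw [← Function.iterate_succ_apply, Function.iterate_succ_apply']
  rfl

theorem stmt9_general (S : ℕ → ℝ) (m : ℕ) (n : ℕ) :
    (Matrix.of fun i j : Fin (m + 1) =>
        if i.val = 0 then (1 : ℝ) else (Δ^[2 * (i.val - 1)] S) (n + j.val)).det
      = Psi m (Δ S) n := by
  rw [Matrix.det_eq_det_colDiff_of_row_zero_eq_one _ fun j => by simp, Psi]
  congr 1
  ext i j
  simp [iterate_Δ_Δ_apply, add_assoc]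

theorem stmt9 (S : ℕ → ℝ) (m : ℕ) (hm : 1 ≤ m) (n : ℕ) :
    (Matrix.of fun i j : Fin (m + 1) =>
        if i.val = 0 then (1 : ℝ) else (Δ^[2 * (i.val - 1)] S) (n + j.val)).det
      = Psi m (Δ S) n :=
  stmt9_general S m n
end

section
/- For every integer m ≥ 1 and every n ∈ ℕ, the determinant of the (m+1)×(m+1) matrix whose row 0 consists entirely of ones, whose row 1 has (1,j) entry equal to n + j (as a real number) for 0 ≤ j ≤ m, and whose (i,j) entry, for 2 ≤ i ≤ m and 0 ≤ j ≤ m, is (Δ^{2i−3} S)_{n+j} (i.e. rows ΔS, Δ³S, …, Δ^{2m−3}S evaluated at columns n, n+1, …, n+m) equals Ψ_{m−1}(Δ³S)_n. -/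
/-- Replacing each column but the first by its difference with its left neighbour keeps the
determinant and turns the constant row `0` into `(1, 0, …, 0)`; expand along it. -/
theorem det_of_apply_add_eq_det_Δ_of_zero_eq_one {k : ℕ} (f : Fin (k + 1) → ℕ → ℝ)
    (hf : ∀ x, f 0 x = 1) (n : ℕ) :
    (Matrix.of fun i j : Fin (k + 1) => f i (n + j)).det
      = (Matrix.of fun i j : Fin k => Δ (f i.succ) (n + j)).det := by
  set B : Matrix (Fin (k + 1)) (Fin (k + 1)) ℝ :=
    Matrix.of fun i j => Fin.cases (f i n) (fun j : Fin k => Δ (f i) (n + j)) j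
  have hB : (Matrix.of fun i j : Fin (k + 1) => f i (n + j)).det = B.det := by
    refine Matrix.det_eq_of_forall_col_eq_smul_add_pred (fun _ => 1) (fun i => rfl) fun i j => ?_
    simp only [B, Matrix.of_apply, Fin.cases_succ, Fin.val_succ, Fin.val_castSucc, Δ]
    ring_nf
  rw [hB, Matrix.det_succ_row_zero, Fin.sum_univ_succ]
  simp [B, hf, Δ, Matrix.submatrix]

theorem stmt11 (S : ℕ → ℝ) (m : ℕ) (hm : 1 ≤ m) (n : ℕ) :
    (Matrix.of fun i j : Fin (m + 1) =>
        if i.val = 0 then (1 : ℝ)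
        else if i.val = 1 then ((n + j.val : ℕ) : ℝ)
        else (Δ^[2 * i.val - 3] S) (n + j.val)).det
      = Psi (m - 1) (Δ^[3] S) n := by
  obtain ⟨k, rfl⟩ : ∃ k, m = k + 1 := ⟨m - 1, by omega⟩
  set f : Fin (k + 2) → ℕ → ℝ := fun i x =>
    if i.val = 0 then 1 else if i.val = 1 then (x : ℝ) else (Δ^[2 * i.val - 3] S) x
  have hf : ∀ i : Fin k, Δ (Δ (f i.succ.succ)) = Δ^[2 * i.val] (Δ^[3] S) := by
    intro i
    simp only [f, Fin.val_succ, add_eq_zero, one_ne_zero, and_false, if_false,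
      Nat.add_eq_right, ← Function.iterate_succ_apply' Δ]
    rw [← Function.iterate_add_apply]
    congr 1
  calc _ = (Matrix.of fun i j : Fin (k + 2) => f i (n + j)).det := rfl
    _ = (Matrix.of fun i j : Fin (k + 1) => Δ (f i.succ) (n + j)).det :=
      det_of_apply_add_eq_det_Δ_of_zero_eq_one f (fun _ => rfl) n
    _ = (Matrix.of fun i j : Fin k => Δ (Δ (f i.succ.succ)) (n + j)).det :=
      det_of_apply_add_eq_det_Δ_of_zero_eq_one _ (fun x => by simp [f, Δ]) n
    _ = Psi (k + 1 - 1) (Δ^[3] S) n := by simp only [hf]; rfl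
end

section
/- Suppose F and G satisfy (B1) for all k ≥ 1 and all n ∈ ℕ, and (B2) for all k ≥ 2 and all n ∈ ℕ, and suppose F_k^n ≠ 0 for all k ≥ 1 and n ∈ ℕ. Define U_k^n = G_k^n / F_k^n. Then for all k ≥ 1 and n ∈ ℕ the factors U_{k+2}^{n+1} − U_{k+2}^n and U_{k+1}^{n+1} − U_{k+1}^n are nonzero, and U satisfies the lattice equation U_{k+3}^n = U_k^{n+1} − 1 / ((U_{k+2}^{n+1} − U_{k+2}^n) · (U_{k+1}^{n+1} − U_{k+1}^n)). -/
/-! Each bilinear relation is a difference of two quotients `G / F` in disguise: (B1) gives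
`U_k^{n+1} - U_k^n = F_{k+1}^n F_{k-1}^{n+1} / (F_k^n F_k^{n+1})` and (B2) at `k + 1` gives
`U_k^{n+1} - U_{k+3}^n = F_{k+2}^{n+1} F_{k+1}^n / (F_{k+3}^n F_k^{n+1})`. The product of the
first quotient at `k + 2` and at `k + 1` telescopes to the reciprocal of the second. -/

theorem div_sub_div_eq_of_mul_sub_mul_eq {K : Type*} [Field K] {f g f' g' r : K}
    (hf : f ≠ 0) (hf' : f' ≠ 0) (h : f * g' - f' * g = r) :
    g' / f' - g / f = r / (f * f') := by
  field_simp
  linear_combination h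

theorem stmt14 (F G : ℕ → ℕ → ℝ)
    (hB1 : ∀ k, 1 ≤ k → ∀ n : ℕ,
      F k n * G k (n + 1) - F k (n + 1) * G k n = F (k + 1) n * F (k - 1) (n + 1))
    (hB2 : ∀ k, 2 ≤ k → ∀ n : ℕ,
      F (k + 2) n * G (k - 1) (n + 1) - F (k - 1) (n + 1) * G (k + 2) n
        = F (k + 1) (n + 1) * F k n)
    (hF : ∀ k, 1 ≤ k → ∀ n : ℕ, F k n ≠ 0)
    (U : ℕ → ℕ → ℝ) (hU : ∀ k n : ℕ, U k n = G k n / F k n) :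
    ∀ k, 1 ≤ k → ∀ n : ℕ,
      U (k + 2) (n + 1) - U (k + 2) n ≠ 0 ∧
      U (k + 1) (n + 1) - U (k + 1) n ≠ 0 ∧
      U (k + 3) n = U k (n + 1)
        - 1 / ((U (k + 2) (n + 1) - U (k + 2) n) * (U (k + 1) (n + 1) - U (k + 1) n)) := by
  intro k hk n
  have hF' : ∀ j m, F (k + j) m ≠ 0 := fun j m => hF (k + j) (by omega) m
  have hF₀ : ∀ m, F k m ≠ 0 := hF k hk
  have hD₂ : U (k + 2) (n + 1) - U (k + 2) n
      = F (k + 3) n * F (k + 1) (n + 1) / (F (k + 2) n * F (k + 2) (n + 1)) := by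
    rw [hU, hU]
    exact div_sub_div_eq_of_mul_sub_mul_eq (hF' 2 n) (hF' 2 (n + 1)) (hB1 (k + 2) (by omega) n)
  have hD₁ : U (k + 1) (n + 1) - U (k + 1) n
      = F (k + 2) n * F k (n + 1) / (F (k + 1) n * F (k + 1) (n + 1)) := by
    rw [hU, hU]
    exact div_sub_div_eq_of_mul_sub_mul_eq (hF' 1 n) (hF' 1 (n + 1)) (hB1 (k + 1) (by omega) n)
  have hC : U k (n + 1) - U (k + 3) n
      = F (k + 2) (n + 1) * F (k + 1) n / (F (k + 3) n * F k (n + 1)) := by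
    rw [hU, hU]
    exact div_sub_div_eq_of_mul_sub_mul_eq (hF' 3 n) (hF₀ (n + 1)) (hB2 (k + 1) (by omega) n)
  have hD₂_ne : U (k + 2) (n + 1) - U (k + 2) n ≠ 0 := by
    rw [hD₂]
    exact div_ne_zero (mul_ne_zero (hF' 3 n) (hF' 1 _)) (mul_ne_zero (hF' 2 n) (hF' 2 _))
  have hD₁_ne : U (k + 1) (n + 1) - U (k + 1) n ≠ 0 := by
    rw [hD₁]
    exact div_ne_zero (mul_ne_zero (hF' 2 n) (hF₀ _)) (mul_ne_zero (hF' 1 n) (hF' 1 _))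
  have h_inv : 1 / ((U (k + 2) (n + 1) - U (k + 2) n) * (U (k + 1) (n + 1) - U (k + 1) n))
      = U k (n + 1) - U (k + 3) n := by
    rw [hD₂, hD₁, hC]
    field_simp [hF' 1 n, hF' 1 (n + 1), hF' 2 n, hF' 2 (n + 1), hF' 3 n, hF₀ (n + 1)]
  exact ⟨hD₂_ne, hD₁_ne, by linear_combination h_inv⟩
end

section
/- (Theorem 2, sufficiency.) Let k ≥ 1, let S : ℕ → ℝ, let S ∈ ℝ, and suppose there exist constants a_1, …, a_k ∈ ℝ such that S_n = S + a_1 (Δ²S)_n + a_2 (Δ⁴S)_n + ⋯ + a_k (Δ^{2k}S)_n for all n ∈ ℕ. Then for every n ∈ ℕ, N_k^{(n)} = S · D_k^{(n)}; in particular, T_k^{(n)} = S for every n at which D_k^{(n)} ≠ 0. -/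
/-- Numerator determinant of the sequence transformation `T_k^{(n)}`. -/
noncomputable def Nk (k : ℕ) (S : ℕ → ℝ) (n : ℕ) : ℝ :=
  (Matrix.of fun i j : Fin (k + 1) => (Δ^[2 * i.val] S) (n + j.val)).det

/-- Denominator determinant of the sequence transformation `T_k^{(n)}`. -/
noncomputable def Dk (k : ℕ) (S : ℕ → ℝ) (n : ℕ) : ℝ :=
  (Matrix.of fun i j : Fin (k + 1) =>
    if i.val = 0 then (1 : ℝ) else (Δ^[2 * i.val] S) (n + j.val)).det

/-! The hypothesis says that the row `(S_{n+j})_j` of the numerator matrix is the combination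
`L • (1, …, 1) + ∑ᵢ aᵢ • (Δ^{2(i+1)} S_{n+j})_j` of the rows of the denominator matrix.
Replacing a row of a matrix by a linear combination of its rows multiplies the determinant
by the coefficient of that row, here `L`. -/

def dkMatrix (k : ℕ) (S : ℕ → ℝ) (n : ℕ) : Matrix (Fin (k + 1)) (Fin (k + 1)) ℝ :=
  Matrix.of fun i j => if i.val = 0 then 1 else (Δ^[2 * i.val] S) (n + j.val)

theorem dkMatrix_det (k : ℕ) (S : ℕ → ℝ) (n : ℕ) : (dkMatrix k S n).det = Dk k S n := rfl

theorem Nk_eq_det_updateRow_dkMatrix (k : ℕ) (S : ℕ → ℝ) (n : ℕ) :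
    Nk k S n = ((dkMatrix k S n).updateRow 0 fun j => S (n + j.val)).det := by
  rw [Nk]
  congr 1
  ext i j
  rcases Fin.eq_zero_or_eq_succ i with rfl | ⟨i, rfl⟩
  · simp
  · simp [dkMatrix]

theorem shifted_eq_sum_smul_dkMatrix {k : ℕ} {S : ℕ → ℝ} {L : ℝ} {a : Fin k → ℝ}
    (hS : ∀ n : ℕ, S n = L + ∑ i : Fin k, a i * (Δ^[2 * (i.val + 1)] S) n) (n : ℕ) :
    (fun j : Fin (k + 1) => S (n + j.val)) =
      ∑ i, (Fin.cons L a : Fin (k + 1) → ℝ) i • dkMatrix k S n i := by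
  ext j
  simp [Fin.sum_univ_succ, dkMatrix, hS (n + j.val)]

theorem Nk_eq_mul_Dk {k : ℕ} {S : ℕ → ℝ} {L : ℝ} {a : Fin k → ℝ}
    (hS : ∀ n : ℕ, S n = L + ∑ i : Fin k, a i * (Δ^[2 * (i.val + 1)] S) n) (n : ℕ) :
    Nk k S n = L * Dk k S n := by
  rw [Nk_eq_det_updateRow_dkMatrix, shifted_eq_sum_smul_dkMatrix hS, Matrix.det_updateRow_sum,
    dkMatrix_det, Fin.cons_zero, smul_eq_mul]

theorem stmt16_general (k : ℕ) (S : ℕ → ℝ) (L : ℝ) (a : Fin k → ℝ)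
    (hS : ∀ n : ℕ, S n = L + ∑ i : Fin k, a i * (Δ^[2 * (i.val + 1)] S) n) :
    ∀ n : ℕ, Nk k S n = L * Dk k S n ∧ (Dk k S n ≠ 0 → Nk k S n / Dk k S n = L) := by
  intro n
  refine ⟨Nk_eq_mul_Dk hS n, fun hD => ?_⟩
  rw [Nk_eq_mul_Dk hS n, mul_div_cancel_right₀ L hD]

theorem stmt16 (k : ℕ) (hk : 1 ≤ k) (S : ℕ → ℝ) (L : ℝ) (a : Fin k → ℝ)
    (hS : ∀ n : ℕ, S n = L + ∑ i : Fin k, a i * (Δ^[2 * (i.val + 1)] S) n) :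
    ∀ n : ℕ, Nk k S n = L * Dk k S n ∧ (Dk k S n ≠ 0 → Nk k S n / Dk k S n = L) :=
  stmt16_general k S L a hS
end

section
/- Let U : ℕ × ℕ → ℝ (written U_k^n) be such that for all k ≥ 1 and all n ∈ ℕ the differences U_{k+2}^{n+1} − U_{k+2}^n and U_{k+1}^{n+1} − U_{k+1}^n are nonzero and U_{k+3}^n = U_k^{n+1} − 1 / ((U_{k+2}^{n+1} − U_{k+2}^n) · (U_{k+1}^{n+1} − U_{k+1}^n)). Then for all k ≥ 1 and all n ∈ ℕ, U satisfies the lattice Boussinesq-type relation (U_{k+1}^{n+1} − U_{k+4}^n) · (U_{k+3}^{n+1} − U_{k+3}^n) − (U_k^{n+2} − U_{k+3}^{n+1}) · (U_{k+1}^{n+2} − U_{k+1}^{n+1}) = 1/(U_{k+2}^{n+1} − U_{k+2}^n) − 1/(U_{k+2}^{n+2} − U_{k+2}^{n+1}). -/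
/-! The recurrence says that each gap `U_k^{n+1} - U_{k+3}^n` is the reciprocal of a product of two
time differences. Substituting this for both gaps, each product on the left-hand side collapses to
the reciprocal of the single time difference of `U_{k+2}` (at times `n` and `n + 1`). -/

theorem one_div_mul_mul_right_cancel {K : Type*} [Field K] (a : K) {b : K} (hb : b ≠ 0) :
    1 / (a * b) * b = 1 / a := by
  rw [div_mul_eq_mul_div, one_mul, div_mul_cancel_right₀ hb, one_div]

theorem one_div_mul_mul_left_cancel {K : Type*} [Field K] (a : K) {b : K} (hb : b ≠ 0) :
    1 / (b * a) * b = 1 / a := by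
  rw [mul_comm b a, one_div_mul_mul_right_cancel a hb]

theorem stmt18_general (U : ℕ → ℕ → ℝ)
    (hden2 : ∀ k, 1 ≤ k → ∀ n : ℕ, U (k + 1) (n + 1) - U (k + 1) n ≠ 0)
    (hrec : ∀ k, 1 ≤ k → ∀ n : ℕ,
      U (k + 3) n = U k (n + 1)
        - 1 / ((U (k + 2) (n + 1) - U (k + 2) n) * (U (k + 1) (n + 1) - U (k + 1) n))) :
    ∀ k, 1 ≤ k → ∀ n : ℕ,
      (U (k + 1) (n + 1) - U (k + 4) n) * (U (k + 3) (n + 1) - U (k + 3) n)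
        - (U k (n + 2) - U (k + 3) (n + 1)) * (U (k + 1) (n + 2) - U (k + 1) (n + 1))
      = 1 / (U (k + 2) (n + 1) - U (k + 2) n)
        - 1 / (U (k + 2) (n + 2) - U (k + 2) (n + 1)) := by
  have gap : ∀ k, 1 ≤ k → ∀ n : ℕ, U k (n + 1) - U (k + 3) n
      = 1 / ((U (k + 2) (n + 1) - U (k + 2) n) * (U (k + 1) (n + 1) - U (k + 1) n)) :=
    fun k hk n => by rw [hrec k hk n, sub_sub_cancel]
  intro k hk n
  rw [gap (k + 1) (by omega) n, gap k hk (n + 1),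
    one_div_mul_mul_left_cancel _ (hden2 (k + 2) (by omega) n),
    one_div_mul_mul_right_cancel _ (hden2 k hk (n + 1))]

theorem stmt18 (U : ℕ → ℕ → ℝ)
    (hden1 : ∀ k, 1 ≤ k → ∀ n : ℕ, U (k + 2) (n + 1) - U (k + 2) n ≠ 0)
    (hden2 : ∀ k, 1 ≤ k → ∀ n : ℕ, U (k + 1) (n + 1) - U (k + 1) n ≠ 0)
    (hrec : ∀ k, 1 ≤ k → ∀ n : ℕ,
      U (k + 3) n = U k (n + 1)
        - 1 / ((U (k + 2) (n + 1) - U (k + 2) n) * (U (k + 1) (n + 1) - U (k + 1) n))) :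
    ∀ k, 1 ≤ k → ∀ n : ℕ,
      (U (k + 1) (n + 1) - U (k + 4) n) * (U (k + 3) (n + 1) - U (k + 3) n)
        - (U k (n + 2) - U (k + 3) (n + 1)) * (U (k + 1) (n + 2) - U (k + 1) (n + 1))
      = 1 / (U (k + 2) (n + 1) - U (k + 2) n)
        - 1 / (U (k + 2) (n + 2) - U (k + 2) (n + 1)) :=
  stmt18_general U hden2 hrec
end
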